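/- arXiv:2112.03228 — 5 statements merged into one kernel-verified Lean document; each statement's English description precedes it below -/
import Mathlib

section
/- If C is a cycle in a finite graph G that is not geodesic, then C can be written as the symmetric difference of two cycles each strictly shorter than C. -/
/-!
Let `u`, `w` be a non-geodesic pair of vertices of the cycle, so that some `u`–`w` walk `q` is
strictly shorter than both arcs `A`, `B` of the cycle between them. Among all such
configurations, over all rotations of the cycle, take one with `q` shortest. If `q` passed through
a vertex `z ≠ u, w` of the cycle, say on `A = A₁ A₂`, then splitting `q = q₁ q₂` at `z` gives
`|q₁| < |A₁|` or `|q₂| < |A₂|`, a configuration with a strictly shorter walk. Hence `q` meets the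
cycle only at `u` and `w`, and the cycle is the symmetric difference of the cycles `A q⁻¹` and
`q B`, both shorter than it because `|q| < |A|, |B|`.
-/

/-- A cycle is geodesic if for any two of its vertices, the shorter of the two arcs
of the cycle between them realizes the graph distance. -/
def SimpleGraph.IsGeodesicCycle {V : Type*} [DecidableEq V] (G : SimpleGraph V) {x : V}
    (c : G.Walk x x) : Prop :=
  c.IsCycle ∧ ∀ (u : V) (hu : u ∈ c.support) (w : V) (hw : w ∈ (c.rotate u hu).support),
    min ((c.rotate u hu).takeUntil w hw).length
        (c.length - ((c.rotate u hu).takeUntil w hw).length) = G.dist u w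

namespace SimpleGraph

variable {V : Type*} {G : SimpleGraph V}

namespace Walk

lemma IsPath.start_notMem_support_tail {u v : V} {p : G.Walk u v} (hp : p.IsPath) :
    u ∉ p.support.tail :=
  (List.nodup_cons.mp (p.cons_tail_support ▸ hp.support_nodup)).1

lemma IsPath.ne_of_not_nil {u v : V} {p : G.Walk u v} (hp : p.IsPath) (h : ¬ p.Nil) : u ≠ v := by
  rintro rfl
  exact h (isPath_iff_nil.mp hp)

lemma perm_edges_append_comm {u v : V} (p : G.Walk u v) (q : G.Walk v u) :
    (p.append q).edges.Perm (q.append p).edges := by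
  rw [edges_append, edges_append]
  exact List.perm_append_comm

lemma IsCycle.append_comm {u v : V} {p : G.Walk u v} {q : G.Walk v u}
    (h : (p.append q).IsCycle) : (q.append p).IsCycle := by
  rw [isCycle_def, isTrail_def, tail_support_append] at h ⊢
  refine ⟨(perm_edges_append_comm p q).nodup_iff.mp h.1, fun hnil => h.2.1 ?_,
    List.nodup_append_comm.mp h.2.2⟩
  rw [eq_nil_iff_nil, nil_append_iff] at hnil ⊢
  exact hnil.symm

end Walk

open Walk

/-- `E` fixes the edges of the cycle `arc₁ arc₂` only up to order, so that all rotations of a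
cycle give shortcuts for the same `E`. -/
structure CycleShortcut (G : SimpleGraph V) (E : List (Sym2 V)) where
  {u w : V}
  arc₁ : G.Walk u w
  arc₂ : G.Walk w u
  walk : G.Walk u w
  isCycle : (arc₁.append arc₂).IsCycle
  edges_perm : (arc₁.append arc₂).edges.Perm E
  length_lt_arc₁ : walk.length < arc₁.length
  length_lt_arc₂ : walk.length < arc₂.length

namespace CycleShortcut

variable {E : List (Sym2 V)}

def symm (s : CycleShortcut G E) : CycleShortcut G E where
  arc₁ := s.arc₂
  arc₂ := s.arc₁
  walk := s.walk.reverse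
  isCycle := s.isCycle.append_comm
  edges_perm := (perm_edges_append_comm _ _).trans s.edges_perm
  length_lt_arc₁ := by rw [length_reverse]; exact s.length_lt_arc₂
  length_lt_arc₂ := by rw [length_reverse]; exact s.length_lt_arc₁

lemma isPath_arc₁ (s : CycleShortcut G E) : s.arc₁.IsPath :=
  s.isCycle.isPath_of_append_left (not_nil_iff_lt_length.mpr (by have := s.length_lt_arc₂; omega))

lemma isPath_arc₂ (s : CycleShortcut G E) : s.arc₂.IsPath :=
  s.isCycle.isPath_of_append_right (not_nil_iff_lt_length.mpr (by have := s.length_lt_arc₁; omega))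

lemma u_ne_w (s : CycleShortcut G E) : s.u ≠ s.w :=
  s.isPath_arc₁.ne_of_not_nil (not_nil_iff_lt_length.mpr (by have := s.length_lt_arc₁; omega))

lemma one_le_length_walk (s : CycleShortcut G E) : 1 ≤ s.walk.length :=
  Nat.one_le_iff_ne_zero.mpr fun h => s.u_ne_w (eq_of_length_eq_zero h)

lemma length_arc₁_append_reverse_lt (s : CycleShortcut G E) :
    (s.arc₁.append s.walk.reverse).length < E.length := by
  rw [← s.edges_perm.length_eq, length_edges, length_append, length_append, length_reverse]
  have := s.length_lt_arc₂
  omega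

lemma length_walk_append_lt (s : CycleShortcut G E) :
    (s.walk.append s.arc₂).length < E.length := by
  rw [← s.edges_perm.length_eq, length_edges, length_append, length_append]
  have := s.length_lt_arc₁
  omega

def MeetsCycleOnlyAtEnds (s : CycleShortcut G E) : Prop :=
  ∀ z ∈ s.walk.support, z ∈ (s.arc₁.append s.arc₂).support → z = s.u ∨ z = s.w

lemma isCycle_arc₁_append_reverse (s : CycleShortcut G E) (hp : s.walk.IsPath)
    (hs : s.MeetsCycleOnlyAtEnds) : (s.arc₁.append s.walk.reverse).IsCycle := by
  refine s.isPath_arc₁.isCycle_append hp.reverse (fun v hvA hvq => ?_)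
    (Or.inl (by have := s.one_le_length_walk; have := s.length_lt_arc₁; omega))
  have hvq' : v ∈ s.walk.support := by
    simpa [support_reverse] using List.mem_of_mem_tail hvq
  rcases hs v hvq' ((mem_support_append_iff _ _).mpr (.inl (List.mem_of_mem_tail hvA))) with h | h
  · exact s.isPath_arc₁.start_notMem_support_tail (h ▸ hvA)
  · exact hp.reverse.start_notMem_support_tail (h ▸ hvq)

lemma isCycle_walk_append_arc₂ (s : CycleShortcut G E) (hp : s.walk.IsPath)
    (hs : s.MeetsCycleOnlyAtEnds) : (s.walk.append s.arc₂).IsCycle := by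
  refine hp.isCycle_append s.isPath_arc₂ (fun v hvq hvB => ?_)
    (Or.inr (by have := s.one_le_length_walk; have := s.length_lt_arc₂; omega))
  have hvB' : v ∈ (s.arc₁.append s.arc₂).support :=
    (mem_support_append_iff _ _).mpr (.inr (List.mem_of_mem_tail hvB))
  rcases hs v (List.mem_of_mem_tail hvq) hvB' with h | h
  · exact hp.start_notMem_support_tail (h ▸ hvq)
  · exact s.isPath_arc₂.start_notMem_support_tail (h ▸ hvB)

variable [DecidableEq V]

lemma toFinset_eq_symmDiff (s : CycleShortcut G E) (hp : s.walk.IsPath)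
    (hs : s.MeetsCycleOnlyAtEnds) :
    E.toFinset = symmDiff (s.arc₁.append s.walk.reverse).edges.toFinset
      (s.walk.append s.arc₂).edges.toFinset := by
  have h₀ := s.isCycle.isTrail
  have h₁ := (s.isCycle_arc₁_append_reverse hp hs).isTrail
  have h₂ := (s.isCycle_walk_append_arc₂ hp hs).isTrail
  rw [isTrail_append] at h₀ h₁ h₂
  rw [← List.toFinset_eq_of_perm _ _ s.edges_perm]
  ext e
  have d₀ : e ∈ s.arc₁.edges → e ∉ s.arc₂.edges := fun h => h₀.2.2 h
  have d₁ : e ∈ s.arc₁.edges → e ∉ s.walk.edges := fun h h' =>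
    h₁.2.2 h (by rwa [edges_reverse, List.mem_reverse])
  have d₂ : e ∈ s.walk.edges → e ∉ s.arc₂.edges := fun h => h₂.2.2 h
  simp only [Finset.mem_symmDiff, List.mem_toFinset, edges_append, List.mem_append,
    edges_reverse, List.mem_reverse]
  tauto

def bypass (s : CycleShortcut G E) : CycleShortcut G E :=
  { s with
    walk := s.walk.bypass
    length_lt_arc₁ := s.walk.length_bypass_le_length.trans_lt s.length_lt_arc₁
    length_lt_arc₂ := s.walk.length_bypass_le_length.trans_lt s.length_lt_arc₂ }

lemma MeetsCycleOnlyAtEnds.bypass {s : CycleShortcut G E} (hs : s.MeetsCycleOnlyAtEnds) :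
    s.bypass.MeetsCycleOnlyAtEnds := fun z hz =>
  hs z (s.walk.support_bypass_subset_support hz)

lemma exists_walk_length_lt_of_mem_arc₁ (s : CycleShortcut G E) {z : V}
    (hzq : z ∈ s.walk.support) (hzA : z ∈ s.arc₁.support) (hzu : z ≠ s.u) (hzw : z ≠ s.w) :
    ∃ t : CycleShortcut G E, t.walk.length < s.walk.length := by
  set A₁ := s.arc₁.takeUntil z hzA
  set A₂ := s.arc₁.dropUntil z hzA
  set q₁ := s.walk.takeUntil z hzq
  set q₂ := s.walk.dropUntil z hzq
  have hA : A₁.length + A₂.length = s.arc₁.length := by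
    rw [← length_append, take_spec]
  have hq : q₁.length + q₂.length = s.walk.length := by
    rw [← length_append, take_spec]
  have hq₁ : q₁.length ≠ 0 := fun h => hzu (eq_of_length_eq_zero h).symm
  have hq₂ : q₂.length ≠ 0 := fun h => hzw (eq_of_length_eq_zero h)
  have hA₀ := s.length_lt_arc₁
  have hB₀ := s.length_lt_arc₂
  have hcut : A₁.append (A₂.append s.arc₂) = s.arc₁.append s.arc₂ := by
    rw [append_assoc, take_spec]
  by_cases h₁ : q₁.length < A₁.length
  · refine ⟨⟨A₁, A₂.append s.arc₂, q₁, hcut ▸ s.isCycle, hcut ▸ s.edges_perm, h₁, ?_⟩,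
      show q₁.length < _ by omega⟩
    rw [length_append]
    omega
  · have hrot : (A₂.append s.arc₂).append A₁ = A₂.append (s.arc₂.append A₁) :=
      (append_assoc ..).symm
    refine ⟨⟨A₂, s.arc₂.append A₁, q₂, hrot ▸ (hcut ▸ s.isCycle).append_comm,
      hrot ▸ (perm_edges_append_comm _ _).symm.trans (hcut ▸ s.edges_perm), by omega, ?_⟩,
      show q₂.length < _ by omega⟩
    rw [length_append]
    omega

lemma exists_walk_length_lt (s : CycleShortcut G E) {z : V} (hzq : z ∈ s.walk.support)
    (hzc : z ∈ (s.arc₁.append s.arc₂).support) (hzu : z ≠ s.u) (hzw : z ≠ s.w) :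
    ∃ t : CycleShortcut G E, t.walk.length < s.walk.length := by
  rcases (mem_support_append_iff _ _).mp hzc with hzA | hzB
  · exact s.exists_walk_length_lt_of_mem_arc₁ hzq hzA hzu hzw
  · have hzq' : z ∈ s.symm.walk.support := by
      simpa [symm, support_reverse] using hzq
    simpa [symm] using s.symm.exists_walk_length_lt_of_mem_arc₁ hzq' hzB hzw hzu

lemma exists_meetsCycleOnlyAtEnds (s : CycleShortcut G E) :
    ∃ t : CycleShortcut G E, t.MeetsCycleOnlyAtEnds := by
  induction hn : s.walk.length using Nat.strong_induction_on generalizing s with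
  | _ n ih =>
    by_cases hs : s.MeetsCycleOnlyAtEnds
    · exact ⟨s, hs⟩
    simp only [MeetsCycleOnlyAtEnds, not_forall, not_or] at hs
    obtain ⟨z, hzq, hzc, hzu, hzw⟩ := hs
    obtain ⟨t, ht⟩ := s.exists_walk_length_lt hzq hzc hzu hzw
    exact ih _ (hn ▸ ht) t rfl

end CycleShortcut

lemma exists_cycleShortcut_of_not_isGeodesicCycle [DecidableEq V] {x : V} {c : G.Walk x x}
    (hc : c.IsCycle) (hng : ¬ G.IsGeodesicCycle c) : Nonempty (CycleShortcut G c.edges) := by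
  simp only [IsGeodesicCycle, hc, true_and, not_forall] at hng
  obtain ⟨u, hu, w, hw, hne⟩ := hng
  set D := c.rotate u hu
  set P := D.takeUntil w hw
  set Q := D.dropUntil w hw
  have hPQ : P.append Q = D := D.take_spec hw
  have hlen : P.length + Q.length = c.length := by
    rw [← length_append, hPQ, length_rotate]
  have hP : G.dist u w ≤ P.length := dist_le P
  have hQ : G.dist u w ≤ Q.length := dist_comm (G := G) ▸ dist_le Q
  obtain ⟨q, hq⟩ := Reachable.exists_walk_length_eq_dist ⟨P⟩
  exact ⟨⟨P, Q, q, hPQ ▸ hc.rotate hu, hPQ ▸ (c.rotate_edges u hu).perm, by omega, by omega⟩⟩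

end SimpleGraph

theorem stmt11_general {V : Type*} [DecidableEq V] (G : SimpleGraph V)
    {x : V} (c : G.Walk x x) (hc : c.IsCycle)
    (hng : ¬ G.IsGeodesicCycle c) :
    ∃ (v₁ v₂ : V) (c₁ : G.Walk v₁ v₁) (c₂ : G.Walk v₂ v₂),
      c₁.IsCycle ∧ c₂.IsCycle ∧ c₁.length < c.length ∧ c₂.length < c.length ∧
      c.edges.toFinset = symmDiff c₁.edges.toFinset c₂.edges.toFinset := by
  obtain ⟨s⟩ := G.exists_cycleShortcut_of_not_isGeodesicCycle hc hng
  obtain ⟨t, ht⟩ := s.exists_meetsCycleOnlyAtEnds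
  have hp : t.bypass.walk.IsPath := t.walk.bypass_isPath
  exact ⟨_, _, _, _, t.bypass.isCycle_arc₁_append_reverse hp ht.bypass,
    t.bypass.isCycle_walk_append_arc₂ hp ht.bypass,
    c.length_edges ▸ t.bypass.length_arc₁_append_reverse_lt,
    c.length_edges ▸ t.bypass.length_walk_append_lt,
    t.bypass.toFinset_eq_symmDiff hp ht.bypass⟩

theorem stmt11 {V : Type*} [Fintype V] [DecidableEq V] (G : SimpleGraph V)
    [DecidableRel G.Adj] {x : V} (c : G.Walk x x) (hc : c.IsCycle)
    (hng : ¬ G.IsGeodesicCycle c) :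
    ∃ (v₁ v₂ : V) (c₁ : G.Walk v₁ v₁) (c₂ : G.Walk v₂ v₂),
      c₁.IsCycle ∧ c₂.IsCycle ∧ c₁.length < c.length ∧ c₂.length < c.length ∧
      c.edges.toFinset = symmDiff c₁.edges.toFinset c₂.edges.toFinset :=
  stmt11_general G c hc hng
end

section
/- Coupling of the Loop O(1) model and FK-Ising (free boundary, no external field): Let G be a finite graph, x ∈ [0,1], and let η be a random even spanning subgraph of G with probability proportional to x^{|η|}. Let X be an independent Bernoulli(x) percolation on E(G), and set η' = η ∪ X. Then η' is distributed as the random cluster model with q = 2 and p = 2x/(1+x), i.e., ℙ(η' = ω) is proportional to (p/(1-p))^{|ω|}·2^{k(ω)}, where k(ω) is the number of connected components of (V, ω). -/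
/-!
Given `η`, the union `η ∪ X` equals `ω` exactly when `ω \ η ⊆ X ⊆ ω`, an event of
probability `x ^ |ω \ η| * (1 - x) ^ |E \ ω|` when `η ⊆ ω`. Hence `ω` gets weight
`N(ω) * x ^ |ω| * (1 - x) ^ |E \ ω|`, where `N(ω)` counts the even subgraphs of `(V, ω)`.

Even subgraphs form the kernel of the mod 2 boundary map `𝔽₂^ω → 𝔽₂^V`. Its image is the
kernel of the map `𝔽₂^V → 𝔽₂^{components}` summing over each connected component, which is
onto, so `N(ω) = 2 ^ (|ω| - |V| + k(ω))` by rank-nullity. As `p / (1 - p) = 2x / (1 - x)`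
for `p = 2x / (1 + x)`, the weight of `ω` is the random-cluster weight times
`(1 + x) ^ |E| / 2 ^ |V|`.
-/

open Finset SimpleGraph

namespace Finset

variable {α R : Type*} [DecidableEq α] [CommRing R]

theorem sum_Icc_pow_mul_pow (p : R) {s t E : Finset α} (hst : s ⊆ t) (htE : t ⊆ E) :
    ∑ X ∈ Icc s t, p ^ #X * (1 - p) ^ (#E - #X) = p ^ #s * (1 - p) ^ (#E - #t) := by
  have hdisj : ∀ u ∈ (t \ s).powerset, Disjoint s u := fun u hu =>
    disjoint_sdiff.mono_right (mem_powerset.mp hu)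
  have hinj : Set.InjOn (s ∪ ·) ((t \ s).powerset : Set (Finset α)) := fun u hu u' hu' h => by
    rw [← union_sdiff_cancel_left (hdisj u hu), ← union_sdiff_cancel_left (hdisj u' hu')]
    exact congrArg (· \ s) h
  have hs : #s ≤ #t := card_le_card hst
  have ht : #t ≤ #E := card_le_card htE
  rw [Icc_eq_image_powerset hst, sum_image hinj]
  calc ∑ u ∈ (t \ s).powerset, p ^ #(s ∪ u) * (1 - p) ^ (#E - #(s ∪ u))
      = ∑ u ∈ (t \ s).powerset,
          p ^ #s * (1 - p) ^ (#E - #t) * (p ^ #u * (1 - p) ^ (#(t \ s) - #u)) := by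
        refine sum_congr rfl fun u hu => ?_
        have hu' : #u ≤ #(t \ s) := card_le_card (mem_powerset.mp hu)
        rw [card_sdiff_of_subset hst] at hu' ⊢
        rw [card_union_of_disjoint (hdisj u hu),
          show #E - (#s + #u) = (#E - #t) + (#t - #s - #u) by omega]
        ring
    _ = p ^ #s * (1 - p) ^ (#E - #t) := by
        rw [← mul_sum, sum_pow_mul_eq_add_pow, add_sub_cancel, one_pow, mul_one]

theorem sum_ite_union_eq (p : R) {η ω E : Finset α} (hω : ω ⊆ E) :
    ∑ X ∈ E.powerset, (if η ∪ X = ω then p ^ #η * (p ^ #X * (1 - p) ^ (#E - #X)) else 0)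
      = if η ⊆ ω then p ^ #ω * (1 - p) ^ (#E - #ω) else 0 := by
  rw [← sum_filter]
  split_ifs with hη
  · have hfilter : E.powerset.filter (η ∪ · = ω) = Icc (ω \ η) ω := by
      ext X
      simp only [mem_filter, mem_powerset, mem_Icc]
      constructor
      · rintro ⟨-, rfl⟩
        exact ⟨sdiff_le_iff.mpr subset_rfl, subset_union_right⟩
      · rintro ⟨h₁, h₂⟩
        exact ⟨h₂.trans hω, subset_antisymm (union_subset hη h₂)
          (sdiff_le_iff.mp h₁)⟩
    rw [hfilter, ← mul_sum, sum_Icc_pow_mul_pow p sdiff_subset hω, ← mul_assoc, ← pow_add,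
      add_comm, card_sdiff_add_card_eq_card hη]
  · exact sum_eq_zero fun X hX => absurd ((mem_filter.mp hX).2 ▸ subset_union_left) hη

theorem sum_filter_sum_ite_union_eq (P : Finset α → Prop) [DecidablePred P] (p : R)
    {ω E : Finset α} (hω : ω ⊆ E) :
    ∑ η ∈ E.powerset.filter P, ∑ X ∈ E.powerset,
        (if η ∪ X = ω then p ^ #η * (p ^ #X * (1 - p) ^ (#E - #X)) else 0)
      = #(ω.powerset.filter P) * (p ^ #ω * (1 - p) ^ (#E - #ω)) := by
  simp_rw [sum_ite_union_eq p hω]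
  rw [← sum_filter, sum_const, nsmul_eq_mul, filter_filter]
  congr 3
  ext η
  simp only [mem_filter, mem_powerset]
  exact ⟨fun h => ⟨h.2.2, h.2.1⟩, fun h => ⟨h.1.trans hω, h.2, h.1⟩⟩

end Finset

namespace SimpleGraph

section

variable {V : Type*}

theorem edgeFinset_fromEdgeSet_of_subset {G : SimpleGraph V} [Fintype G.edgeSet]
    {ω : Finset (Sym2 V)} [Fintype (fromEdgeSet (ω : Set (Sym2 V))).edgeSet]
    (hω : ω ⊆ G.edgeFinset) : (fromEdgeSet (ω : Set (Sym2 V))).edgeFinset = ω := by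
  ext e
  simp only [mem_edgeFinset, edgeSet_fromEdgeSet, Set.mem_sdiff, mem_coe, Sym2.mem_diagSet]
  exact ⟨And.left, fun he => ⟨he, G.not_isDiag_of_mem_edgeSet (mem_edgeFinset.mp (hω he))⟩⟩

variable (H : SimpleGraph V) [Fintype H.edgeSet]

def edgeSupport (f : H.edgeSet → ZMod 2) : Finset (Sym2 V) :=
  (univ.filter (f · = 1)).map (Function.Embedding.subtype _)

variable {H}

theorem mem_edgeSupport {f : H.edgeSet → ZMod 2} {e : Sym2 V} :
    e ∈ H.edgeSupport f ↔ ∃ h : e ∈ H.edgeSet, f ⟨e, h⟩ = 1 := by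
  simp [edgeSupport]

theorem edgeSupport_subset_edgeFinset (f : H.edgeSet → ZMod 2) :
    H.edgeSupport f ⊆ H.edgeFinset := fun _ he =>
  mem_edgeFinset.mpr (mem_edgeSupport.mp he).1

end

variable {V : Type*} [DecidableEq V]

theorem indicator_mem_eq_single_sub_single {u v : V} (h : u ≠ v) :
    (fun w => if w ∈ s(u, v) then (1 : ZMod 2) else 0) = Pi.single u 1 - Pi.single v 1 := by
  funext w
  by_cases hu : w = u
  · subst hu; simp [h]
  · by_cases hv : w = v
    · subst hv; simp [hu]
    · simp [hu, hv]

variable (H : SimpleGraph V)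

noncomputable def edgeIndicator (η : Finset (Sym2 V)) : H.edgeSet → ZMod 2 :=
  fun e => if (e : Sym2 V) ∈ η then 1 else 0

section

variable [Fintype V]

open scoped Classical in
noncomputable def componentSum : (V → ZMod 2) →ₗ[ZMod 2] (H.ConnectedComponent → ZMod 2) :=
  Fintype.linearCombination (ZMod 2) fun v => Pi.single (H.connectedComponentMk v) 1

open scoped Classical in
noncomputable def componentSection :
    (H.ConnectedComponent → ZMod 2) →ₗ[ZMod 2] (V → ZMod 2) :=
  Fintype.linearCombination (ZMod 2) fun C => Pi.single C.out 1

variable {H}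

open scoped Classical in
theorem componentSum_single (v : V) (x : ZMod 2) :
    componentSum H (Pi.single v x) = Pi.single (H.connectedComponentMk v) x := by
  rw [componentSum, Fintype.linearCombination_apply_single, ← Pi.single_smul', smul_eq_mul,
    mul_one]

theorem componentSum_comp_componentSection :
    componentSum H ∘ₗ componentSection H = LinearMap.id := by
  classical
  refine LinearMap.pi_ext fun C x => ?_
  rw [LinearMap.comp_apply, componentSection, Fintype.linearCombination_apply_single, map_smul,
    componentSum_single, show H.connectedComponentMk C.out = C from C.out_eq, ← Pi.single_smul',
    smul_eq_mul, mul_one, LinearMap.id_apply]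

end

variable [Fintype H.edgeSet]

noncomputable def boundaryMod2 : (H.edgeSet → ZMod 2) →ₗ[ZMod 2] (V → ZMod 2) :=
  Fintype.linearCombination (ZMod 2) fun e v => if v ∈ (e : Sym2 V) then 1 else 0

variable {H}

theorem edgeIndicator_edgeSupport (f : H.edgeSet → ZMod 2) :
    H.edgeIndicator (H.edgeSupport f) = f := by
  funext e
  have hval : f e = 0 ∨ f e = 1 := by generalize f e = z; decide +revert
  simp only [edgeIndicator, mem_edgeSupport, Subtype.coe_eta, e.2, exists_true_left]
  rcases hval with h | h <;> simp [h]

theorem edgeSupport_edgeIndicator {η : Finset (Sym2 V)} (hη : η ⊆ H.edgeFinset) :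
    H.edgeSupport (H.edgeIndicator η) = η := by
  ext e
  simp only [mem_edgeSupport, edgeIndicator, ite_eq_left_iff, zero_ne_one, imp_false, not_not]
  exact ⟨fun ⟨_, h⟩ => h, fun h => ⟨mem_edgeFinset.mp (hη h), h⟩⟩

theorem boundaryMod2_edgeIndicator {η : Finset (Sym2 V)} (hη : η ⊆ H.edgeFinset) (v : V) :
    boundaryMod2 H (H.edgeIndicator η) v = #(η.filter (v ∈ ·)) := by
  rw [boundaryMod2, Fintype.linearCombination_apply, Finset.sum_apply]
  simp only [edgeIndicator, Pi.smul_apply, smul_eq_mul, ite_mul, one_mul, zero_mul]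
  rw [← sum_subtype H.edgeFinset (fun _ => mem_edgeFinset)
    (fun e => if e ∈ η then (if v ∈ e then (1 : ZMod 2) else 0) else 0),
    sum_ite_mem, inter_eq_right.mpr hη, sum_boole]

theorem forall_even_iff_edgeIndicator_mem_ker {η : Finset (Sym2 V)} (hη : η ⊆ H.edgeFinset) :
    (∀ v, Even #(η.filter (v ∈ ·))) ↔
      H.edgeIndicator η ∈ LinearMap.ker (boundaryMod2 H) := by
  simp only [LinearMap.mem_ker, funext_iff, boundaryMod2_edgeIndicator hη, Pi.zero_apply,
    ZMod.natCast_eq_zero_iff_even]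

theorem single_sub_single_mem_range_boundaryMod2 {u v : V} (h : H.Reachable u v) :
    Pi.single u 1 - Pi.single v 1 ∈ LinearMap.range (boundaryMod2 H) := by
  obtain ⟨p⟩ := h
  induction p with
  | nil => rw [sub_self]; exact zero_mem _
  | @cons a b c hab _ ih =>
    rw [← sub_add_sub_cancel _ (Pi.single b 1)]
    refine add_mem ?_ ih
    rw [← indicator_mem_eq_single_sub_single hab.ne, boundaryMod2,
      Fintype.range_linearCombination]
    exact Submodule.subset_span ⟨⟨s(a, b), hab⟩, rfl⟩

variable [Fintype V]

theorem range_boundaryMod2_le_ker_componentSum :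
    LinearMap.range (boundaryMod2 H) ≤ LinearMap.ker (componentSum H) := by
  rw [boundaryMod2, Fintype.range_linearCombination, Submodule.span_le]
  rintro _ ⟨⟨e, he⟩, rfl⟩
  induction e using Sym2.ind with
  | _ u v =>
  rw [mem_edgeSet] at he
  change componentSum H (fun w => if w ∈ s(u, v) then 1 else 0) = 0
  rw [indicator_mem_eq_single_sub_single (H.ne_of_adj he),
    map_sub, componentSum_single, componentSum_single,
    ConnectedComponent.connectedComponentMk_eq_of_adj he, sub_self]

theorem sub_componentSection_mem_range_boundaryMod2 (f : V → ZMod 2) :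
    f - componentSection H (componentSum H f) ∈ LinearMap.range (boundaryMod2 H) := by
  classical
  have hL : LinearMap.id - componentSection H ∘ₗ componentSum H = Fintype.linearCombination
      (ZMod 2) fun v => Pi.single v 1 - Pi.single (H.connectedComponentMk v).out 1 := by
    refine LinearMap.pi_ext fun v x => ?_
    simp [componentSection, Fintype.linearCombination_apply_single, componentSum_single,
      smul_sub, ← Pi.single_smul']
  change (LinearMap.id - componentSection H ∘ₗ componentSum H :
    (V → ZMod 2) →ₗ[ZMod 2] (V → ZMod 2)) f ∈ _
  rw [hL]
  refine (Fintype.range_linearCombination _ _).le.trans (Submodule.span_le.mpr ?_)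
    (LinearMap.mem_range_self _ f)
  rintro _ ⟨v, rfl⟩
  exact single_sub_single_mem_range_boundaryMod2
    (ConnectedComponent.exact (H.connectedComponentMk v).out_eq.symm)

theorem range_boundaryMod2 :
    LinearMap.range (boundaryMod2 H) = LinearMap.ker (componentSum H) := by
  refine le_antisymm (range_boundaryMod2_le_ker_componentSum (H := H)) fun f hf => ?_
  simpa [LinearMap.mem_ker.mp hf] using sub_componentSection_mem_range_boundaryMod2 (H := H) f

theorem finrank_ker_boundaryMod2_add_card :
    Module.finrank (ZMod 2) (LinearMap.ker (boundaryMod2 H)) + Fintype.card V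
      = #H.edgeFinset + Nat.card H.ConnectedComponent := by
  classical
  have hsurj : LinearMap.range (componentSum H) = ⊤ := LinearMap.range_eq_top.mpr fun g =>
    ⟨componentSection H g, LinearMap.congr_fun componentSum_comp_componentSection g⟩
  have hdom := (boundaryMod2 H).finrank_range_add_finrank_ker
  have hcod := (componentSum H).finrank_range_add_finrank_ker
  rw [range_boundaryMod2, Module.finrank_fintype_fun_eq_card] at hdom
  rw [hsurj, finrank_top, Module.finrank_fintype_fun_eq_card,
    Module.finrank_fintype_fun_eq_card] at hcod
  rw [edgeFinset_card, Nat.card_eq_fintype_card]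
  omega

theorem card_filter_even_eq_natCard_ker :
    #(H.edgeFinset.powerset.filter fun η => ∀ v, Even #(η.filter (v ∈ ·)))
      = Nat.card (LinearMap.ker (boundaryMod2 H)) := by
  rw [← Nat.card_eq_finsetCard]
  refine Nat.card_congr
    { toFun := fun η => ⟨H.edgeIndicator η.1, ?_⟩
      invFun := fun f => ⟨H.edgeSupport f.1, ?_⟩
      left_inv := fun η => ?_
      right_inv := fun f => Subtype.ext (edgeIndicator_edgeSupport f.1) }
  · obtain ⟨hη, heven⟩ := mem_filter.mp η.2
    exact (forall_even_iff_edgeIndicator_mem_ker (mem_powerset.mp hη)).mp heven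
  · rw [mem_filter, mem_powerset, forall_even_iff_edgeIndicator_mem_ker
      (edgeSupport_subset_edgeFinset f.1), edgeIndicator_edgeSupport]
    exact ⟨edgeSupport_subset_edgeFinset f.1, f.2⟩
  · exact Subtype.ext (edgeSupport_edgeIndicator (mem_powerset.mp (mem_filter.mp η.2).1))

theorem card_filter_even_mul_two_pow :
    #(H.edgeFinset.powerset.filter fun η => ∀ v, Even #(η.filter (v ∈ ·)))
        * 2 ^ Fintype.card V = 2 ^ #H.edgeFinset * 2 ^ Nat.card H.ConnectedComponent := by
  rw [card_filter_even_eq_natCard_ker, Module.natCard_eq_pow_finrank (K := ZMod 2),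
    Nat.card_zmod, ← pow_add, ← pow_add, finrank_ker_boundaryMod2_add_card]

end SimpleGraph

/-- Coupling of the Loop O(1) model and FK-Ising (free boundary, no external field):
the law of `η' = η ∪ X` (unnormalized joint weights) is proportional to the
random cluster measure with `q = 2`, `p = 2x/(1+x)`. -/
theorem stmt13 {V : Type*} [Fintype V] [DecidableEq V] (G : SimpleGraph V)
    [DecidableRel G.Adj] (x : ℝ) (hx : x ∈ Set.Icc (0 : ℝ) 1) :
    ∃ c : ℝ, 0 < c ∧ ∀ ω' ∈ G.edgeFinset.powerset,
      (∑ η ∈ G.edgeFinset.powerset.filter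
          (fun η => ∀ v : V, Even ((η.filter fun e => v ∈ e).card)),
        ∑ X ∈ G.edgeFinset.powerset,
          (if η ∪ X = ω' then
            x ^ η.card * (x ^ X.card * (1 - x) ^ (G.edgeFinset.card - X.card))
          else 0))
      = c * ((2 * x / (1 + x)) ^ ω'.card
          * (1 - 2 * x / (1 + x)) ^ (G.edgeFinset.card - ω'.card)
          * (2 : ℝ) ^ Nat.card
              (SimpleGraph.fromEdgeSet (↑ω' : Set (Sym2 V))).ConnectedComponent) := by
  classical
  obtain ⟨hx0, -⟩ := hx
  refine ⟨(1 + x) ^ #G.edgeFinset / 2 ^ Fintype.card V, by positivity, fun ω hω => ?_⟩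
  rw [mem_powerset] at hω
  have hcount : (#(ω.powerset.filter fun η => ∀ v, Even #(η.filter (v ∈ ·))) : ℝ)
      * 2 ^ Fintype.card V
        = 2 ^ #ω * 2 ^ Nat.card (fromEdgeSet (ω : Set (Sym2 V))).ConnectedComponent := by
    have h := (fromEdgeSet (ω : Set (Sym2 V))).card_filter_even_mul_two_pow
    rw [edgeFinset_fromEdgeSet_of_subset hω] at h
    exact_mod_cast h
  rw [sum_filter_sum_ite_union_eq _ x hω, ← Nat.add_sub_cancel' (card_le_card hω)]
  have h1x : 1 + x ≠ 0 := by positivity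
  have hq : 1 - 2 * x / (1 + x) = (1 - x) / (1 + x) := by field_simp; ring
  rw [hq, div_pow, div_pow, mul_pow, pow_add, Nat.add_sub_cancel_left]
  field_simp
  linear_combination x ^ #ω * (1 - x) ^ (#G.edgeFinset - #ω) * hcount
end

section
/- Let G be an infinite connected locally finite graph and F a one-ended spanning forest of G (every component of F is an infinite tree with exactly one end). Then F contains no nonempty even subgraph: any set of edges of F in which every vertex has even degree is empty. -/
open CategoryTheory

lemma exists_end_eval {V : Type*} (G : SimpleGraph V) [SimpleGraph.LocallyFinite G]
    [Fact G.Preconnected] [Infinite V] (K : Finset V) (C : G.ComponentCompl (K : Set V))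
    (hC : C.supp.Infinite) :
    ∃ s : G.end, s.val (Opposite.op K) = C := by
  classical
  set Φ := G.componentComplFunctor with hΦ
  haveI : ∀ j, Finite (Φ.obj j) := fun j => G.componentCompl_finite j.unop
  haveI : ∀ j, Nonempty (Φ.obj j) := fun j => G.componentCompl_nonempty_of_infinite j.unop
  have hML : Φ.IsMittagLeffler :=
    Φ.isMittagLeffler_of_exists_finite_range (fun j => ⟨j, 𝟙 j, Set.toFinite _⟩)
  have hCe : C ∈ Φ.eventualRange (Opposite.op K) :=
    (G.infinite_iff_in_eventualRange C).mp hC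
  haveI : ∀ j, Nonempty (Φ.toEventualRanges.obj j) := fun j => Φ.toEventualRanges_nonempty hML j
  haveI : ∀ j, Finite (Φ.toEventualRanges.obj j) := inferInstance
  obtain ⟨t, ht⟩ := Φ.toEventualRanges.eval_section_surjective_of_surjective
    (Φ.surjective_toEventualRanges hML) (Opposite.op K) ⟨C, hCe⟩
  refine ⟨Φ.toEventualRangesSectionsEquiv t, ?_⟩
  have : (Φ.toEventualRangesSectionsEquiv t).val (Opposite.op K) = (t.val (Opposite.op K)).val := rfl
  rw [this]
  exact congrArg Subtype.val ht

lemma aux_finite {V : Type*} (G : SimpleGraph V) (hlf : G.LocallyFinite)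
    (hconn : G.Connected) (hinf : Infinite V)
    (F : SimpleGraph V) (hFG : F ≤ G) (hacyclic : F.IsAcyclic)
    (hcomp : ∀ c : F.ConnectedComponent,
      c.supp.Infinite ∧ Nat.card (SimpleGraph.end (F.induce c.supp)) = 1)
    (u v : V) (huv : F.Adj u v) :
    {w : V | (F.deleteEdges {s(u,v)}).Reachable u w}.Finite ∨
    {w : V | (F.deleteEdges {s(u,v)}).Reachable v w}.Finite := by
  classical
  have hlfF : ∀ w : V, (F.neighborSet w).Finite := by
    intro w
    haveI := hlf w
    exact (G.neighborSet w).toFinite.subset (fun x hx => hFG hx)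
  set A : Set V := {w : V | (F.deleteEdges {s(u,v)}).Reachable u w} with hAdef
  set B : Set V := {w : V | (F.deleteEdges {s(u,v)}).Reachable v w} with hBdef
  by_contra hcon
  push_neg at hcon
  have hA : A.Infinite := hcon.1
  have hB : B.Infinite := hcon.2
  set c := F.connectedComponentMk u with hc
  have huc : u ∈ c.supp := (SimpleGraph.ConnectedComponent.mem_supp_iff _ _).mpr rfl
  have hvc : v ∈ c.supp := (SimpleGraph.ConnectedComponent.mem_supp_iff _ _).mpr
    (SimpleGraph.ConnectedComponent.sound huv.symm.reachable)
  set Gc := F.induce c.supp with hGc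
  haveI : Infinite c.supp := (hcomp c).1.to_subtype
  haveI : SimpleGraph.LocallyFinite Gc := by
    intro w
    apply Set.Finite.fintype
    have hsub : Gc.neighborSet w ⊆ Subtype.val ⁻¹' (F.neighborSet w.val) := fun x hx => hx
    exact ((hlfF w.val).preimage (Subtype.val_injective.injOn)).subset hsub
  have hGcconn : Gc.Connected := by
    apply SimpleGraph.induce_connected_of_patches u huc
    intro w hw
    have hr : F.Reachable u w := by
      rw [SimpleGraph.ConnectedComponent.mem_supp_iff _ _, hc] at hw
      exact (SimpleGraph.ConnectedComponent.eq.mp hw).symm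
    obtain ⟨p⟩ := hr
    have hsub : {x | x ∈ p.support} ⊆ c.supp := by
      intro x hx
      rw [SimpleGraph.ConnectedComponent.mem_supp_iff _ _, hc]
      exact SimpleGraph.ConnectedComponent.sound ((p.takeUntil x hx).reachable).symm
    exact ⟨{x | x ∈ p.support}, hsub, p.start_mem_support, p.end_mem_support,
      (p.connected_induce_support).preconnected _ _⟩
  haveI : Fact Gc.Preconnected := ⟨hGcconn.preconnected⟩
  set u' : c.supp := ⟨u, huc⟩ with hu'
  set v' : c.supp := ⟨v, hvc⟩ with hv'
  have ha : Gc.Adj u' v' := huv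
  set Gc' := Gc.deleteEdges {s(u',v')} with hGc'
  have hnr' : ¬ Gc'.Reachable u' v' := by
    intro hr
    obtain ⟨x, p, hcyc, -⟩ :=
      SimpleGraph.adj_and_reachable_delete_edges_iff_exists_cycle.mp ⟨ha, hr⟩
    exact hacyclic _ (hcyc.map (f := (SimpleGraph.Embedding.induce c.supp).toHom)
      Subtype.val_injective)
  set A' : Set c.supp := {w : c.supp | Gc'.Reachable u' w} with hA'def
  set B' : Set c.supp := {w : c.supp | Gc'.Reachable v' w} with hB'def
  have hF'le : F.deleteEdges {s(u,v)} ≤ F := SimpleGraph.deleteEdges_le _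
  -- lift walks from F' to Gc'
  have hlift : ∀ (a b : V) (p : (F.deleteEdges {s(u,v)}).Walk a b)
      (ha : a ∈ c.supp) (hb : b ∈ c.supp), Gc'.Reachable ⟨a, ha⟩ ⟨b, hb⟩ := by
    intro a b p
    induction p with
    | nil => intro ha hb; exact SimpleGraph.Reachable.refl _
    | @cons a x b h q ih =>
      intro ha hb
      rw [SimpleGraph.deleteEdges_adj] at h
      obtain ⟨hax, hne⟩ := h
      have hx : x ∈ c.supp := by
        rw [SimpleGraph.ConnectedComponent.mem_supp_iff _ _] at ha ⊢
        rw [← ha]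
        exact SimpleGraph.ConnectedComponent.sound hax.symm.reachable
      have hadj' : Gc'.Adj ⟨a, ha⟩ ⟨x, hx⟩ := by
        rw [hGc', SimpleGraph.deleteEdges_adj]
        refine ⟨hax, ?_⟩
        intro hmem
        apply hne
        simp only [Set.mem_singleton_iff] at hmem ⊢
        have := congrArg (Sym2.map Subtype.val) hmem
        simpa using this
      exact hadj'.reachable.trans (ih hx hb)
  have hAsub : A ⊆ Subtype.val '' A' := by
    intro w hw
    have hwF : F.Reachable u w := hw.mono hF'le
    have hb : w ∈ c.supp := (SimpleGraph.ConnectedComponent.mem_supp_iff _ _).mpr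
      (SimpleGraph.ConnectedComponent.sound hwF.symm)
    obtain ⟨p⟩ := hw
    exact ⟨⟨w, hb⟩, hlift u w p huc hb, rfl⟩
  have hBsub : B ⊆ Subtype.val '' B' := by
    intro w hw
    have hwF : F.Reachable v w := hw.mono hF'le
    have hb : w ∈ c.supp := (SimpleGraph.ConnectedComponent.mem_supp_iff _ _).mpr
      (SimpleGraph.ConnectedComponent.sound (hwF.symm.trans huv.symm.reachable))
    obtain ⟨p⟩ := hw
    exact ⟨⟨w, hb⟩, hlift v w p hvc hb, rfl⟩
  have hA' : A'.Infinite := by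
    intro hfin'
    exact hA ((hfin'.image Subtype.val).subset hAsub)
  have hB' : B'.Infinite := by
    intro hfin'
    exact hB ((hfin'.image Subtype.val).subset hBsub)
  -- the finite cut
  set K : Finset c.supp := {u', v'} with hK
  have hu'K : u' ∈ (K : Set c.supp) := by simp [hK]
  -- reachability within a component-complement transfers to Gc'
  have hKhom : ∀ (x y : c.supp) (hx : x ∉ (K : Set c.supp)) (hy : y ∉ (K : Set c.supp)),
      (Gc.induce ((K : Set c.supp))ᶜ).Reachable ⟨x, hx⟩ ⟨y, hy⟩ → Gc'.Reachable x y := by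
    intro x y hx hy hr
    have : ∀ (a b : ↥((K : Set c.supp)ᶜ)), (Gc.induce ((K : Set c.supp))ᶜ).Adj a b →
        Gc'.Adj a.val b.val := by
      intro a b hab
      rw [hGc', SimpleGraph.deleteEdges_adj]
      refine ⟨hab, ?_⟩
      intro hmem
      simp only [Set.mem_singleton_iff, Sym2.eq_iff] at hmem
      rcases hmem with ⟨h1, -⟩ | ⟨h2, -⟩
      · exact a.prop (by simp [hK, h1])
      · exact a.prop (by simp [hK, h2])
    exact hr.map ⟨Subtype.val, fun {a b} hab => this a b hab⟩
  have hside : ∀ (C : Gc.ComponentCompl (K : Set c.supp)) (x y : c.supp),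
      x ∈ C → y ∈ C → x ∈ A' → y ∈ A' := by
    intro C x y hxC hyC hxA
    obtain ⟨hx, hxmk⟩ := hxC
    obtain ⟨hy, hymk⟩ := hyC
    have : (Gc.induce ((K : Set c.supp))ᶜ).Reachable ⟨x, hx⟩ ⟨y, hy⟩ := by
      rw [← SimpleGraph.ConnectedComponent.eq]
      exact hxmk.trans hymk.symm
    exact hxA.trans (hKhom x y hx hy this)
  have hsideB : ∀ (C : Gc.ComponentCompl (K : Set c.supp)) (x y : c.supp),
      x ∈ C → y ∈ C → x ∈ B' → y ∈ B' := by
    intro C x y hxC hyC hxB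
    obtain ⟨hx, hxmk⟩ := hxC
    obtain ⟨hy, hymk⟩ := hyC
    have : (Gc.induce ((K : Set c.supp))ᶜ).Reachable ⟨x, hx⟩ ⟨y, hy⟩ := by
      rw [← SimpleGraph.ConnectedComponent.eq]
      exact hxmk.trans hymk.symm
    exact hxB.trans (hKhom x y hx hy this)
  -- find infinite component-complements inside A' and B'
  have hfind : ∀ (S : Set c.supp), S.Infinite → ∃ C : Gc.ComponentCompl (K : Set c.supp),
      C.supp.Infinite ∧ ∃ x, x ∈ C ∧ x ∈ S := by
    intro S hS
    haveI : Infinite ↥(S \ (K : Set c.supp) : Set c.supp) :=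
      (hS.diff K.finite_toSet).to_subtype
    obtain ⟨C, hC⟩ := Finite.exists_infinite_fiber
      (fun x : ↥(S \ (K : Set c.supp) : Set c.supp) => Gc.componentComplMk x.prop.2)
    refine ⟨C, ?_, ?_⟩
    · refine Set.infinite_of_injective_forall_mem
        (f := fun z : ↥((fun x : ↥(S \ (K : Set c.supp) : Set c.supp) =>
          Gc.componentComplMk x.prop.2) ⁻¹' {C}) => (z.val.val : c.supp)) ?_ ?_
      · intro z1 z2 h12
        exact Subtype.ext (Subtype.ext h12)
      · intro z
        exact ⟨z.val.prop.2, Set.mem_singleton_iff.mp z.prop⟩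
    · obtain ⟨z, hz⟩ := (Set.infinite_coe_iff.mp hC).nonempty
      exact ⟨z.val, ⟨z.prop.2, Set.mem_singleton_iff.mp hz⟩, z.prop.1⟩
  obtain ⟨CA, hCAinf, xA, hxACA, hxAA⟩ := hfind A' hA'
  obtain ⟨CB, hCBinf, xB, hxBCB, hxBB⟩ := hfind B' hB'
  have hCAne : CA ≠ CB := by
    intro hEq
    have hx : xB ∈ A' := hside CA xA xB hxACA (hEq ▸ hxBCB) hxAA
    have h1 : Gc'.Reachable u' xB := hx
    have h2 : Gc'.Reachable v' xB := hxBB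
    exact hnr' (h1.trans h2.symm)
  have h1 : Nat.card Gc.end = 1 := (hcomp c).2
  obtain ⟨sA, hsA⟩ := exists_end_eval Gc K CA hCAinf
  obtain ⟨sB, hsB⟩ := exists_end_eval Gc K CB hCBinf
  haveI : Subsingleton Gc.end := (Nat.card_eq_one_iff_unique.mp h1).1
  exact hCAne (by rw [← hsA, ← hsB, Subsingleton.elim sA sB])

lemma aux_side {V : Type*} (F : SimpleGraph V) (hlfF : ∀ w : V, (F.neighborSet w).Finite)
    (H : Set (Sym2 V)) (hHF : H ⊆ F.edgeSet) (heven : ∀ v : V, Even {e ∈ H | v ∈ e}.ncard)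
    (u v : V) (huv : s(u,v) ∈ H)
    (hnr : ¬ (F.deleteEdges {s(u,v)}).Reachable u v)
    (hfin : {w : V | (F.deleteEdges {s(u,v)}).Reachable u w}.Finite) : False := by
  classical
  set S : Set V := {w : V | (F.deleteEdges {s(u,v)}).Reachable u w} with hSdef
  have huS : u ∈ S := SimpleGraph.Reachable.refl u
  have hvS : v ∉ S := hnr
  have hclosed : ∀ a b : V, s(a,b) ∈ H → s(a,b) ≠ s(u,v) → a ∈ S → b ∈ S := by
    intro a b hab hne haS
    have hadj : F.Adj a b := (F.mem_edgeSet).mp (hHF hab)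
    have hadj' : (F.deleteEdges {s(u,v)}).Adj a b := by
      rw [SimpleGraph.deleteEdges_adj]
      exact ⟨hadj, by simpa using hne⟩
    exact haS.trans hadj'.reachable
  have hinc : ∀ w : V, ({e ∈ H | w ∈ e}).Finite := by
    intro w
    have h1 : Finite (F.neighborSet w) := (hlfF w).to_subtype
    have h2 : Finite (F.incidenceSet w) :=
      Finite.of_equiv _ (F.incidenceSetEquivNeighborSet w).symm
    have h3 : (F.incidenceSet w).Finite := Set.toFinite _
    exact h3.subset (fun e he => ⟨hHF he.1, he.2⟩)
  have hHS : ({e ∈ H | ∃ w ∈ S, w ∈ e}).Finite := by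
    have hsub : {e ∈ H | ∃ w ∈ S, w ∈ e} ⊆ ⋃ w ∈ S, {e ∈ H | w ∈ e} := by
      rintro e ⟨he, w, hw, hwe⟩
      exact Set.mem_biUnion hw ⟨he, hwe⟩
    exact ((hfin.biUnion (fun w _ => hinc w)).subset hsub)
  set Sf : Finset V := hfin.toFinset with hSf
  set Hf : Finset (Sym2 V) := hHS.toFinset with hHf
  have hmemSf : ∀ w, w ∈ Sf ↔ w ∈ S := fun w => Set.Finite.mem_toFinset _
  have hmemHf : ∀ e, e ∈ Hf ↔ e ∈ H ∧ ∃ w ∈ S, w ∈ e := fun e => Set.Finite.mem_toFinset _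
  have hcard : ∀ w ∈ Sf, {e ∈ H | w ∈ e}.ncard = (Hf.filter (fun e => w ∈ e)).card := by
    intro w hw
    rw [← Set.ncard_coe_finset]
    congr 1
    ext e
    simp only [Finset.coe_filter, Set.mem_setOf_eq, hmemHf]
    constructor
    · rintro ⟨he, hwe⟩; exact ⟨⟨he, w, (hmemSf w).mp hw, hwe⟩, hwe⟩
    · rintro ⟨⟨he, _⟩, hwe⟩; exact ⟨he, hwe⟩
  have hNeven : Even (∑ w ∈ Sf, (Hf.filter (fun e => w ∈ e)).card) := by
    apply Finset.even_sum
    intro w hw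
    rw [← hcard w hw]
    exact heven w
  have hswap : ∑ w ∈ Sf, (Hf.filter (fun e => w ∈ e)).card
      = ∑ e ∈ Hf, (Sf.filter (fun w => w ∈ e)).card := by
    simp_rw [Finset.card_filter]
    exact Finset.sum_comm
  have hedge : ∀ e ∈ Hf, (Sf.filter (fun w => w ∈ e)).card = if e = s(u,v) then 1 else 2 := by
    intro e he
    obtain ⟨he1, w0, hw0S, hw0e⟩ := (hmemHf e).mp he
    induction e using Sym2.ind with
    | _ a b =>
      have hadj : F.Adj a b := (F.mem_edgeSet).mp (hHF he1)
      have hne : a ≠ b := hadj.ne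
      by_cases heq : s(a,b) = s(u,v)
      · rw [if_pos heq]
        have hfil : Sf.filter (fun w => w ∈ s(a,b)) = {u} := by
          ext w
          simp only [Finset.mem_filter, Finset.mem_singleton, hmemSf, heq, Sym2.mem_iff]
          constructor
          · rintro ⟨hwS, rfl | rfl⟩
            · rfl
            · exact absurd hwS hvS
          · rintro rfl; exact ⟨huS, Or.inl rfl⟩
        rw [hfil, Finset.card_singleton]
      · rw [if_neg heq]
        have habS : a ∈ S ∧ b ∈ S := by
          rcases Sym2.mem_iff.mp hw0e with rfl | rfl
          · exact ⟨hw0S, hclosed _ _ he1 heq hw0S⟩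
          · refine ⟨hclosed w0 a ?_ ?_ hw0S, hw0S⟩
            · rwa [Sym2.eq_swap]
            · rwa [Sym2.eq_swap]
        have hfil : Sf.filter (fun w => w ∈ s(a,b)) = {a, b} := by
          ext w
          simp only [Finset.mem_filter, Finset.mem_insert, Finset.mem_singleton, hmemSf,
            Sym2.mem_iff]
          constructor
          · rintro ⟨_, h⟩; exact h
          · rintro (rfl | rfl)
            · exact ⟨habS.1, Or.inl rfl⟩
            · exact ⟨habS.2, Or.inr rfl⟩
        rw [hfil, Finset.card_pair hne]
  have huvHf : s(u,v) ∈ Hf := (hmemHf _).mpr ⟨huv, u, huS, Sym2.mem_mk_left u v⟩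
  rw [hswap, Finset.sum_congr rfl hedge, ← Finset.add_sum_erase _ _ huvHf, if_pos rfl,
    Finset.sum_congr rfl (fun e he => if_neg (Finset.ne_of_mem_erase he)),
    Finset.sum_const, smul_eq_mul] at hNeven
  rw [Nat.even_iff] at hNeven
  omega


theorem stmt15 {V : Type*} (G : SimpleGraph V) (hlf : G.LocallyFinite)
    (hconn : G.Connected) (hinf : Infinite V)
    (F : SimpleGraph V) (hFG : F ≤ G) (hacyclic : F.IsAcyclic)
    (hcomp : ∀ c : F.ConnectedComponent,
      c.supp.Infinite ∧ Nat.card (SimpleGraph.end (F.induce c.supp)) = 1)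
    (H : Set (Sym2 V)) (hHF : H ⊆ F.edgeSet)
    (heven : ∀ v : V, Even {e ∈ H | v ∈ e}.ncard) :
    H = ∅ := by
  classical
  by_contra hne
  obtain ⟨e₀, he₀⟩ := Set.nonempty_iff_ne_empty.mpr hne
  revert he₀
  induction e₀ using Sym2.ind with
  | _ u v =>
    intro he₀
    have huv : F.Adj u v := (F.mem_edgeSet).mp (hHF he₀)
    have hlfF : ∀ w : V, (F.neighborSet w).Finite := by
      intro w
      haveI := hlf w
      exact (G.neighborSet w).toFinite.subset (fun x hx => hFG hx)
    have hnr : ∀ a b : V, F.Adj a b → ¬ (F.deleteEdges {s(a,b)}).Reachable a b := by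
      intro a b hadj hr
      obtain ⟨x, p, hcyc, -⟩ :=
        SimpleGraph.adj_and_reachable_delete_edges_iff_exists_cycle.mp ⟨hadj, hr⟩
      exact hacyclic p hcyc
    rcases aux_finite G hlf hconn hinf F hFG hacyclic hcomp u v huv with hfin | hfin
    · exact aux_side F hlfF H hHF heven u v he₀ (hnr u v huv) hfin
    · have hswap : s(v,u) = s(u,v) := Sym2.eq_swap
      refine aux_side F hlfF H hHF heven v u (by rwa [hswap]) ?_ ?_
      · rw [hswap]
        exact fun hr => hnr u v huv hr.symm
      · simp only [hswap]
        exact hfin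
end

section
/- Every nonempty even subgraph of a locally finite infinite graph contains either a finite simple cycle or a bi-infinite simple path. -/
/-!
Let `H'` be the graph with edge set `H`. Its degrees are finite and even, so a vertex on an edge
has a second neighbour; hence from any edge one can walk on forever in both directions without
ever immediately turning back. If `H'` has a cycle we are done. Otherwise such a walk never
revisits a vertex: if the next vertex already lay on the path traversed so far, it would be a
vertex of that path adjacent to its end, and in a forest this can only be the penultimate vertex,
which would be a backtrack.
-/

namespace SimpleGraph

variable {V : Type*} {G : SimpleGraph V}

structure IsNonBacktracking {ι : Type*} [AddMonoidWithOne ι] (G : SimpleGraph V) (s : ι → V) :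
    Prop where
  adj : ∀ n, G.Adj (s n) (s (n + 1))
  ne : ∀ n, s (n + 2) ≠ s n

def walkOfSeq (s : ℕ → V) (h : ∀ n, G.Adj (s n) (s (n + 1))) :
    (n : ℕ) → G.Walk (s 0) (s n)
  | 0 => .nil
  | n + 1 => (walkOfSeq s h n).concat (h n)

lemma mem_support_walkOfSeq (s : ℕ → V) (h : ∀ n, G.Adj (s n) (s (n + 1))) {k n : ℕ}
    (hk : k ≤ n) : s k ∈ (walkOfSeq s h n).support := by
  induction n with
  | zero => simp [walkOfSeq, Nat.le_zero.mp hk]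
  | succ n ih =>
    rcases hk.lt_or_eq with hk | rfl
    · simp [walkOfSeq, ih (Nat.le_of_lt_succ hk)]
    · simp [walkOfSeq]

lemma IsAcyclic.isPath_walkOfSeq (hG : G.IsAcyclic) {s : ℕ → V} (hs : G.IsNonBacktracking s) :
    ∀ n, (walkOfSeq s hs.adj n).IsPath
  | 0 => .nil
  | 1 => by simpa [walkOfSeq, Walk.concat_isPath_iff] using (hs.adj 0).ne'
  | n + 2 => by
    have hp := hG.isPath_walkOfSeq hs (n + 1)
    refine hp.concat (fun hmem ↦ hs.ne n ?_) _
    exact hG.eq_penultimate_of_adj_end hp (hs.adj (n + 1)) hmem |>.trans (by simp [walkOfSeq])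

lemma IsAcyclic.injective_of_isNonBacktracking_nat (hG : G.IsAcyclic) {s : ℕ → V}
    (hs : G.IsNonBacktracking s) : Function.Injective s := by
  refine .of_lt_imp_ne fun i j hij heq ↦ ?_
  obtain ⟨n, rfl⟩ := Nat.exists_eq_add_of_lt hij
  have hp := hG.isPath_walkOfSeq hs (i + n + 1)
  simp only [walkOfSeq, Walk.concat_isPath_iff] at hp
  exact hp.2 (heq ▸ mem_support_walkOfSeq s hs.adj (by omega))

lemma IsAcyclic.injective_of_isNonBacktracking_int (hG : G.IsAcyclic) {f : ℤ → V}
    (hf : G.IsNonBacktracking f) : Function.Injective f := by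
  intro m n hmn
  set b := min m n
  have hshift : G.IsNonBacktracking fun k : ℕ ↦ f (b + k) :=
    ⟨fun k ↦ by simpa [add_assoc] using hf.adj (b + k),
      fun k ↦ by simpa [add_assoc] using hf.ne (b + k)⟩
  have key : ∀ k, b ≤ k → f k = f (b + (k - b).toNat) := fun k hk ↦ by
    rw [Int.toNat_of_nonneg (by omega), add_sub_cancel]
  have := hG.injective_of_isNonBacktracking_nat hshift
    ((key m (min_le_left m n)).symm.trans (hmn.trans (key n (min_le_right m n))))
  omega

lemma exists_isNonBacktracking_nat (hG : ∀ ⦃u v⦄, G.Adj u v → ∃ w, G.Adj v w ∧ w ≠ u)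
    {a b : V} (hab : G.Adj a b) :
    ∃ s : ℕ → V, G.IsNonBacktracking s ∧ s 0 = a ∧ s 1 = b := by
  choose next hnext using fun d : G.Dart ↦ hG d.adj
  let step (d : G.Dart) : G.Dart := ⟨(d.snd, next d), (hnext d).1⟩
  let d (n : ℕ) : G.Dart := step^[n] ⟨(a, b), hab⟩
  have hd (n : ℕ) : d (n + 1) = step (d n) := Function.iterate_succ_apply' ..
  refine ⟨fun n ↦ (d n).fst, ⟨fun n ↦ ?_, fun n ↦ ?_⟩, rfl, rfl⟩
  · simp [hd, step, (d n).adj]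
  · show (d (n + 1 + 1)).fst ≠ (d n).fst
    simpa [hd, step] using (hnext (d n)).2

lemma exists_isNonBacktracking_int (hG : ∀ ⦃u v⦄, G.Adj u v → ∃ w, G.Adj v w ∧ w ≠ u)
    {a b : V} (hab : G.Adj a b) :
    ∃ f : ℤ → V, G.IsNonBacktracking f := by
  obtain ⟨F, hF, hF0, hF1⟩ := exists_isNonBacktracking_nat hG hab
  obtain ⟨B, hB, hB0, hB1⟩ := exists_isNonBacktracking_nat hG hab.symm
  -- `F` runs forward on `[0, ∞)` and `B` backward on `(-∞, 1]`; they agree on `{0, 1}`, and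
  -- every window `{n, n + 1, n + 2}` lies in one of the two rays.
  let f (n : ℤ) : V := if 0 ≤ n then F n.toNat else B (1 - n).toNat
  have hfF (n : ℤ) (hn : 0 ≤ n) : f n = F n.toNat := if_pos hn
  have hfB (n : ℤ) (hn : n ≤ 1) : f n = B (1 - n).toNat := by
    rcases lt_or_ge n 0 with hn' | hn'
    · exact if_neg hn'.not_ge
    · obtain rfl | rfl : n = 0 ∨ n = 1 := by omega
      exacts [hF0.trans hB1.symm, hF1.trans hB0.symm]
  refine ⟨f, fun n ↦ ?_, fun n ↦ ?_⟩ <;> rcases le_or_gt 0 n with hn | hn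
  · rw [hfF n hn, hfF _ (by omega), show (n + 1).toNat = n.toNat + 1 by omega]
    exact hF.adj _
  · rw [hfB n (by omega), hfB _ (by omega), show (1 - n).toNat = (-n).toNat + 1 by omega,
      show (1 - (n + 1)).toNat = (-n).toNat by omega]
    exact (hB.adj _).symm
  · rw [hfF n hn, hfF _ (by omega), show (n + 2).toNat = n.toNat + 2 by omega]
    exact hF.ne _
  · rw [hfB n (by omega), hfB _ (by omega), show (1 - n).toNat = (-1 - n).toNat + 2 by omega,
      show (1 - (n + 2)).toNat = (-1 - n).toNat by omega]
    exact (hB.ne _).symm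

lemma exists_adj_ne_of_even_ncard_neighborSet {v w : V} (hfin : (G.neighborSet v).Finite)
    (heven : Even (G.neighborSet v).ncard) (hvw : G.Adj v w) : ∃ u, G.Adj v u ∧ u ≠ w := by
  have hpos : 0 < (G.neighborSet v).ncard := (Set.ncard_pos hfin).mpr ⟨w, hvw⟩
  obtain ⟨k, hk⟩ := heven
  exact (G.neighborSet v).exists_ne_of_one_lt_ncard (by omega) w

lemma ncard_incidenceSet (v : V) : (G.incidenceSet v).ncard = (G.neighborSet v).ncard := by
  classical
  exact Nat.card_congr (G.incidenceSetEquivNeighborSet v)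

end SimpleGraph

open SimpleGraph

theorem stmt16 {V : Type*} (G : SimpleGraph V) (hlf : G.LocallyFinite)
    (H : Set (Sym2 V)) (hHG : H ⊆ G.edgeSet) (hne : H.Nonempty)
    (heven : ∀ v : V, Even {e ∈ H | v ∈ e}.ncard) :
    (∃ (v : V) (c : G.Walk v v), c.IsCycle ∧ ∀ e ∈ c.edges, e ∈ H) ∨
    (∃ f : ℤ → V, Function.Injective f ∧ ∀ n : ℤ, s(f n, f (n + 1)) ∈ H) := by
  set H' := fromEdgeSet H
  have hedges : H'.edgeSet = H :=
    (edgeSet_eq_iff _ _).mpr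
      ⟨rfl, Set.disjoint_left.mpr fun _ he ↦ G.not_isDiag_of_mem_edgeSet (hHG he)⟩
  have hle : H' ≤ G := edgeSet_subset_edgeSet.mp (hedges ▸ hHG)
  by_cases hacyc : H'.IsAcyclic
  · right
    have hfin (v : V) : (H'.neighborSet v).Finite :=
      (G.neighborSet v).toFinite.subset (neighborSet_mono hle v)
    have hleaf : ∀ ⦃u v⦄, H'.Adj u v → ∃ w, H'.Adj v w ∧ w ≠ u := fun u v huv ↦
      exists_adj_ne_of_even_ncard_neighborSet (hfin v)
        (by simpa [← ncard_incidenceSet, incidenceSet, hedges] using heven v) huv.symm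
    obtain ⟨e, he⟩ := hne
    induction e using Sym2.ind with | _ a b =>
    have hab : H'.Adj a b := by rwa [← mem_edgeSet, hedges]
    obtain ⟨f, hf⟩ := exists_isNonBacktracking_int hleaf hab
    exact ⟨f, hacyc.injective_of_isNonBacktracking_int hf, fun n ↦ hedges ▸ hf.adj n⟩
  · left
    obtain ⟨v, c, hc⟩ : ∃ (v : V) (c : H'.Walk v v), c.IsCycle := by
      simpa [IsAcyclic] using hacyc
    refine ⟨v, c.mapLe hle, hc.mapLe hle, fun e he ↦ ?_⟩
    rw [Walk.edges_mapLe_eq_edges] at he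
    exact hedges ▸ c.edges_subset_edgeSet he
end

section
/- Let G be a locally finite connected infinite graph and T an end-faithful spanning tree of G. For each edge e ∈ E(G)\E(T) let C_e be the unique (fundamental) cycle in T ∪ {e}. Then the family {C_e} is locally finite: every edge of G lies in only finitely many of the cycles C_e. -/
/-!
Suppose the tree edge `xy` lay on infinitely many fundamental cycles `C_e`. Deleting `xy` from `T`
leaves a forest `D` in which `x` and `y` lie in different components `A` and `B`, and each such `e`
joins `A` to `B`. By local finiteness these edges have infinitely many ends in `A`, so König's
lemma, run along geodesics of `D`, gives a ray `r ⊆ A` from `x` such that infinitely many of these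
ends lie beyond each `r n`; choosing the edges accordingly, the same gives a ray `s ⊆ B` from `y`
with infinitely many of the chosen edges beyond both `r α` and `s β` for all `α`, `β`. Attaching
every vertex to the last vertex of the ray lying on a geodesic towards it turns these edges into
infinitely many disjoint `r`–`s` paths in `G`, and zigzagging along them gives a ray of `G` meeting
both `r` and `s` infinitely often. By end-faithfulness some ray of `T` does too; but a ray of `T`
uses the edge `xy` at most once, so it eventually stays in `A` or in `B`.
-/

/-- A ray in a graph: an injective sequence of successively adjacent vertices. -/
def SimpleGraph.IsRay {V : Type*} (G : SimpleGraph V) (f : ℕ → V) : Prop :=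
  Function.Injective f ∧ ∀ n, G.Adj (f n) (f (n + 1))

/-- Two rays are equivalent if some third ray meets both infinitely often. -/
def SimpleGraph.RaysEquiv {V : Type*} (G : SimpleGraph V) (r s : ℕ → V) : Prop :=
  ∃ t : ℕ → V, G.IsRay t ∧ {n | ∃ m, r m = t n}.Infinite ∧ {n | ∃ m, s m = t n}.Infinite

/-- A spanning subgraph `T` of `G` is end faithful if the natural map from ends of `T`
to ends of `G` is a bijection: two rays of `T` are equivalent in `G` iff they are
equivalent in `T`, and every ray of `G` is equivalent in `G` to a ray of `T`. -/
def EndFaithful {V : Type*} (G T : SimpleGraph V) : Prop :=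
  (∀ r s : ℕ → V, T.IsRay r → T.IsRay s → (G.RaysEquiv r s ↔ T.RaysEquiv r s)) ∧
  (∀ r : ℕ → V, G.IsRay r → ∃ s : ℕ → V, T.IsRay s ∧ G.RaysEquiv r s)

namespace SimpleGraph

variable {V : Type*} {G H T D : SimpleGraph V} {r s : ℕ → V}

lemma Walk.IsPath.append {u v w : V} {p : G.Walk u v} {q : G.Walk v w} (hp : p.IsPath)
    (hq : q.IsPath) (h : ∀ z ∈ p.support, z ∈ q.support → z = v) : (p.append q).IsPath := by
  rw [Walk.isPath_def, Walk.support_append, List.nodup_append]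
  refine ⟨hp.support_nodup, hq.support_nodup.sublist q.support.tail_sublist, ?_⟩
  rintro z hzp _ hzq rfl
  have hnd := hq.support_nodup
  rw [← q.cons_tail_support] at hnd
  exact (List.nodup_cons.mp hnd).1 (h z hzp (List.mem_of_mem_tail hzq) ▸ hzq)

lemma Walk.reachable_of_mem_support {u v z : V} (p : G.Walk u v) (hz : z ∈ p.support) :
    G.Reachable u z := by
  obtain ⟨q, -, -⟩ := p.mem_support_iff_exists_append.mp hz
  exact q.reachable

namespace IsRay

lemma mono (hr : H.IsRay r) (hHG : H ≤ G) : G.IsRay r :=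
  ⟨hr.1, fun n => hHG (hr.2 n)⟩

lemma reachable (hr : G.IsRay r) (n : ℕ) : G.Reachable (r 0) (r n) := by
  induction n with
  | zero => rfl
  | succ n ih => exact ih.trans (hr.2 n).reachable

def segment (hr : G.IsRay r) (a : ℕ) : (k : ℕ) → G.Walk (r a) (r (a + k))
  | 0 => Walk.nil
  | k + 1 => (hr.segment a k).concat (hr.2 (a + k))

lemma support_segment (hr : G.IsRay r) (a k : ℕ) :
    (hr.segment a k).support = (List.range (k + 1)).map (fun i => r (a + i)) := by
  induction k with
  | zero => rfl
  | succ k ih =>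
    rw [segment, Walk.support_concat, ih, List.range_succ (n := k + 1),
      List.map_append]
    rfl

lemma mem_support_segment (hr : G.IsRay r) {a k : ℕ} {z : V} :
    z ∈ (hr.segment a k).support ↔ ∃ i ≤ k, r (a + i) = z := by
  simp [support_segment]

lemma isPath_segment (hr : G.IsRay r) (a k : ℕ) : (hr.segment a k).IsPath := by
  rw [Walk.isPath_def, support_segment]
  exact List.nodup_range.map fun i j h => Nat.add_left_cancel (hr.1 h)

end IsRay

lemma infinite_setOf_exists_eq_of_forall_exists_gt {r t : ℕ → V} (hr : Function.Injective r)
    (h : ∀ N, ∃ m, N < m ∧ r m ∈ Set.range t) : {n | ∃ m, r m = t n}.Infinite := by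
  intro hfin
  refine Set.infinite_of_forall_exists_gt (s := r ⁻¹' Set.range t)
    (fun N => (h N).imp fun _ hm => ⟨hm.2, hm.1⟩) ?_
  refine (hfin.image t).preimage hr.injOn |>.subset ?_
  rintro m ⟨n, hn⟩
  exact ⟨n, ⟨m, hn.symm⟩, hn⟩

theorem exists_isRay_of_forall_append {u : V} (W : ℕ → Σ v, G.Walk u v)
    (hW : ∀ n, (W n).2.IsPath)
    (hext : ∀ n, ∃ q : G.Walk (W n).1 (W (n + 1)).1, ¬q.Nil ∧ (W (n + 1)).2 = (W n).2.append q) :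
    ∃ t, G.IsRay t ∧ ∀ n, ∀ z ∈ (W n).2.support, z ∈ Set.range t := by
  have hprefix : ∀ m n, m ≤ n → ∃ q : G.Walk (W m).1 (W n).1, (W n).2 = (W m).2.append q := by
    intro m n hmn
    induction n, hmn using Nat.le_induction with
    | base => exact ⟨Walk.nil, (Walk.append_nil _).symm⟩
    | succ n _ ih =>
      obtain ⟨q, hq⟩ := ih
      obtain ⟨q', -, hq'⟩ := hext n
      exact ⟨q.append q', by rw [hq', hq, Walk.append_assoc]⟩
  have hlen : ∀ n, n ≤ (W n).2.length := by
    intro n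
    induction n with
    | zero => exact Nat.zero_le _
    | succ n ih =>
      obtain ⟨q, hq, hWq⟩ := hext n
      rw [hWq, Walk.length_append]
      have := Walk.not_nil_iff_lt_length.mp hq
      omega
  have hagree : ∀ m n i, i ≤ (W m).2.length → i ≤ (W n).2.length →
      (W m).2.getVert i = (W n).2.getVert i := by
    have hle : ∀ m n i, m ≤ n → i ≤ (W m).2.length → (W n).2.getVert i = (W m).2.getVert i := by
      intro m n i hmn hi
      obtain ⟨q, hq⟩ := hprefix m n hmn
      rw [hq, Walk.getVert_append', if_pos hi]
    intro m n i hm hn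
    rcases le_total m n with h | h
    exacts [(hle m n i h hm).symm, hle n m i h hn]
  refine ⟨fun i => (W i).2.getVert i, ⟨fun i j hij => ?_, fun i => ?_⟩, fun n z hz => ?_⟩
  · have hi : i ≤ (W (i + j)).2.length := (hlen _).trans' (by omega)
    have hj : j ≤ (W (i + j)).2.length := (hlen _).trans' (by omega)
    refine (hW (i + j)).getVert_injOn hi hj ?_
    simp only at hij
    rw [← hagree i _ i (hlen i) hi, ← hagree j _ j (hlen j) hj, hij]
  · have hi : i < (W (i + 1)).2.length := hlen (i + 1)
    simp only
    rw [hagree i (i + 1) i (hlen i) hi.le, hagree (i + 1) (i + 1) (i + 1) (hlen _) (hlen _)]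
    exact Walk.adj_getVert_succ _ hi
  · obtain ⟨i, rfl, hi⟩ := Walk.mem_support_iff_exists_getVert.mp hz
    exact ⟨i, hagree i n i (hlen i) hi⟩

def Walk.IsPathBetween (r s : ℕ → V) {i j : ℕ} (P : G.Walk (r i) (s j)) : Prop :=
  P.IsPath ∧ (∀ k, r k ∈ P.support → k = i) ∧ (∀ k, s k ∈ P.support → k = j)

lemma Walk.IsPathBetween.reverse {i j : ℕ} {P : G.Walk (r i) (s j)}
    (hP : P.IsPathBetween r s) : P.reverse.IsPathBetween s r := by
  simp only [Walk.IsPathBetween, Walk.isPath_reverse_iff, Walk.support_reverse, List.mem_reverse]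
  exact ⟨hP.1, hP.2.2, hP.2.1⟩

lemma exists_append_segment_append (hr : G.IsRay r) (hrs : Disjoint (Set.range r) (Set.range s))
    {u : V} {α β i j : ℕ} {W : G.Walk u (r α)} (hW : W.IsPath)
    (hWr : ∀ k, r k ∈ W.support → k ≤ α) (hWs : ∀ k, s k ∈ W.support → k ≤ β)
    (hαi : α < i) (hβj : β < j) {P : G.Walk (r i) (s j)} (hP : P.IsPathBetween r s)
    (hPW : ∀ z ∈ P.support, z ∉ W.support) :
    ∃ q : G.Walk (r α) (s j), r i ∈ q.support ∧ (W.append q).IsPath ∧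
      (∀ k, r k ∈ (W.append q).support → k ≤ i) ∧ (∀ k, s k ∈ (W.append q).support → k ≤ j) := by
  obtain ⟨k, rfl⟩ := Nat.exists_eq_add_of_lt hαi
  let seg := hr.segment α (k + 1)
  have hseg : (seg.append P).IsPath := by
    refine (hr.isPath_segment α (k + 1)).append hP.1 fun z hz hzP => ?_
    obtain ⟨m, -, rfl⟩ := hr.mem_support_segment.mp hz
    rw [hP.2.1 _ hzP]
    rfl
  refine ⟨seg.append P, (Walk.mem_support_append_iff _ _).mpr (Or.inr P.start_mem_support),
    hW.append hseg fun z hzW hz => ?_, fun m hm => ?_, fun m hm => ?_⟩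
  · rcases (Walk.mem_support_append_iff _ _).mp hz with hz | hz
    · obtain ⟨m, -, rfl⟩ := hr.mem_support_segment.mp hz
      rw [show m = 0 by have := hWr _ hzW; omega, Nat.add_zero]
    · exact absurd hzW (hPW z hz)
  · rcases (Walk.mem_support_append_iff _ _).mp hm with hm | hm
    · exact (hWr m hm).trans (by omega)
    rcases (Walk.mem_support_append_iff _ _).mp hm with hm | hm
    · obtain ⟨m', hm', hmm'⟩ := hr.mem_support_segment.mp hm
      rw [hr.1 hmm'.symm]
      omega
    · exact (hP.2.1 m hm).le
  · rcases (Walk.mem_support_append_iff _ _).mp hm with hm | hm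
    · exact (hWs m hm).trans hβj.le
    rcases (Walk.mem_support_append_iff _ _).mp hm with hm | hm
    · obtain ⟨m', -, hmm'⟩ := hr.mem_support_segment.mp hm
      exact absurd hmm' (hrs.ne_of_mem ⟨_, rfl⟩ ⟨m, rfl⟩)
    · exact (hP.2.2 m hm).le

variable (G r s) in
structure ZigzagStage where
  α : ℕ
  β : ℕ
  walk : G.Walk (r 0) (r α)
  isPath : walk.IsPath
  le_of_mem_left : ∀ k, r k ∈ walk.support → k ≤ α
  le_of_mem_right : ∀ k, s k ∈ walk.support → k ≤ β

lemma ZigzagStage.exists_next (hr : G.IsRay r) (hs : G.IsRay s)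
    (hrs : Disjoint (Set.range r) (Set.range s))
    (h : ∀ S : Set V, S.Finite → ∃ (i j : ℕ) (P : G.Walk (r i) (s j)),
      P.IsPathBetween r s ∧ ∀ z ∈ P.support, z ∉ S)
    (σ : ZigzagStage G r s) :
    ∃ σ' : ZigzagStage G r s, σ.α < σ'.α ∧ σ.β < σ'.β ∧ s σ'.β ∈ σ'.walk.support ∧
      ∃ q, ¬q.Nil ∧ σ'.walk = σ.walk.append q := by
  have avoid : ∀ (a b : ℕ) {v : V} (W : G.Walk (r 0) v), ∃ (i j : ℕ) (P : G.Walk (r i) (s j)),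
      P.IsPathBetween r s ∧ (∀ z ∈ P.support, z ∉ W.support) ∧ a < i ∧ b < j := by
    intro a b v W
    obtain ⟨i, j, P, hP, hPS⟩ := h ({z | z ∈ W.support} ∪ r '' Set.Iic a ∪ s '' Set.Iic b)
      ((W.support.finite_toSet.union ((Set.finite_Iic a).image r)).union
        ((Set.finite_Iic b).image s))
    refine ⟨i, j, P, hP, fun z hz hzW => hPS z hz (.inl (.inl hzW)), ?_, ?_⟩
    · by_contra hi
      exact hPS _ P.start_mem_support (.inl (.inr ⟨i, not_lt.mp hi, rfl⟩))
    · by_contra hj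
      exact hPS _ P.end_mem_support (.inr ⟨j, not_lt.mp hj, rfl⟩)
  -- Run along `r` to a fresh path `P`, cross to `s`, run along `s` and return by a fresh `P'`.
  obtain ⟨i, j, P, hP, hPW, hi, hj⟩ := avoid σ.α σ.β σ.walk
  obtain ⟨q₁, -, hW₁, hW₁r, hW₁s⟩ := exists_append_segment_append hr hrs σ.isPath
    σ.le_of_mem_left σ.le_of_mem_right hi hj hP hPW
  obtain ⟨i', j', P', hP', hP'W, hi', hj'⟩ := avoid i j (σ.walk.append q₁)
  obtain ⟨q₂, hq₂, hW₂, hW₂s, hW₂r⟩ := exists_append_segment_append hs hrs.symm hW₁ hW₁s hW₁r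
    hj' hi' hP'.reverse (by simpa using hP'W)
  refine ⟨⟨i', j', (σ.walk.append q₁).append q₂, hW₂, hW₂r, hW₂s⟩, hi.trans hi', hj.trans hj',
    (Walk.mem_support_append_iff _ _).mpr (.inr hq₂), q₁.append q₂, fun hnil =>
    (hi.trans hi').ne (hr.1 hnil.eq), (Walk.append_assoc _ _ _).symm⟩

theorem raysEquiv_of_forall_finite_exists_isPathBetween (hr : G.IsRay r) (hs : G.IsRay s)
    (hrs : Disjoint (Set.range r) (Set.range s))
    (h : ∀ S : Set V, S.Finite → ∃ (i j : ℕ) (P : G.Walk (r i) (s j)),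
      P.IsPathBetween r s ∧ ∀ z ∈ P.support, z ∉ S) :
    G.RaysEquiv r s := by
  choose next hα hβ hmem hext using ZigzagStage.exists_next hr hs hrs h
  let σ₀ : ZigzagStage G r s :=
    ⟨0, 0, Walk.nil, Walk.IsPath.nil, fun k hk => by simpa using hr.1 (by simpa using hk),
      fun k hk => absurd (by simpa using hk : s k = r 0).symm (hrs.ne_of_mem ⟨0, rfl⟩ ⟨k, rfl⟩)⟩
  let σ : ℕ → ZigzagStage G r s := fun n => next^[n] σ₀
  have hσ : ∀ n, σ (n + 1) = next (σ n) := fun n => Function.iterate_succ_apply' next n σ₀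
  have hge : ∀ n, n ≤ (σ n).α ∧ n ≤ (σ n).β := by
    intro n
    induction n with
    | zero => exact ⟨Nat.zero_le _, Nat.zero_le _⟩
    | succ n ih => rw [hσ]; exact ⟨ih.1.trans_lt (hα _), ih.2.trans_lt (hβ _)⟩
  obtain ⟨t, ht, hsupp⟩ := exists_isRay_of_forall_append (fun n => ⟨r (σ n).α, (σ n).walk⟩)
    (fun n => (σ n).isPath) (fun n => by rw [hσ]; exact hext (σ n))
  refine ⟨t, ht, infinite_setOf_exists_eq_of_forall_exists_gt hr.1 fun N => ?_,
    infinite_setOf_exists_eq_of_forall_exists_gt hs.1 fun N => ?_⟩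
  · exact ⟨(σ (N + 1)).α, (hge _).1, hsupp (N + 1) _ (Walk.end_mem_support _)⟩
  · refine ⟨(σ (N + 1)).β, (hge _).2, hsupp (N + 1) _ ?_⟩
    have := hmem (σ N)
    rwa [← hσ] at this

lemma Reachable.exists_adj_dist_add_one_eq {u v : V} (huv : G.Reachable u v) (hne : u ≠ v) :
    ∃ w, G.Adj u w ∧ G.dist w v + 1 = G.dist u v := by
  obtain ⟨p, hp⟩ := huv.exists_walk_length_eq_dist
  cases p with
  | nil => exact absurd rfl hne
  | cons hadj q =>
    refine ⟨_, hadj, le_antisymm ?_ ?_⟩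
    · rw [← hp, Walk.length_cons]
      exact Nat.succ_le_succ (dist_le q)
    · have := hadj.reachable.dist_triangle_left v
      rw [dist_eq_one_iff_adj.mpr hadj] at this
      omega

lemma Walk.dist_add_dist_of_mem_support {u v z : V} (p : G.Walk u v) (hp : p.length = G.dist u v)
    (hz : z ∈ p.support) : G.dist u z + G.dist z v = G.dist u v := by
  obtain ⟨q, q', rfl⟩ := p.mem_support_iff_exists_append.mp hz
  have := q.reachable.dist_triangle_left v
  have := dist_le q
  have := dist_le q'
  rw [Walk.length_append] at hp
  omega

lemma exists_adj_infinite_dist_add_dist_eq (hfin : ∀ v, (G.neighborSet v).Finite) {x w : V}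
    (hxw : G.Reachable x w) {M : Set V} (hMx : ∀ m ∈ M, G.Reachable x m)
    (hM : {m ∈ M | G.dist x w + G.dist w m = G.dist x m}.Infinite) :
    ∃ w', G.Adj w w' ∧ G.dist x w' = G.dist x w + 1 ∧
      {m ∈ M | G.dist x w' + G.dist w' m = G.dist x m}.Infinite := by
  have hcover : {m ∈ M | G.dist x w + G.dist w m = G.dist x m} ⊆ {w} ∪
      ⋃ w' ∈ {w' ∈ G.neighborSet w | G.dist x w' = G.dist x w + 1},
        {m ∈ M | G.dist x w' + G.dist w' m = G.dist x m} := by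
    rintro m ⟨hm, hwm⟩
    rcases eq_or_ne w m with rfl | hne
    · exact .inl rfl
    obtain ⟨w', hadj, hw'⟩ := (hxw.symm.trans (hMx m hm)).exists_adj_dist_add_one_eq hne
    have h₁ := hxw.dist_triangle_left w'
    have h₂ := (hxw.trans hadj.reachable).dist_triangle_left m
    rw [dist_eq_one_iff_adj.mpr hadj] at h₁
    exact .inr (Set.mem_biUnion (x := w') ⟨hadj, by omega⟩ ⟨hm, by omega⟩)
  by_contra! hfin'
  refine hM ((Set.finite_singleton w).union ?_ |>.subset hcover)
  exact ((hfin w).subset fun _ h => h.1).biUnion fun w' hw' => hfin' w' hw'.1 hw'.2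

theorem exists_isRay_infinite_dist_add_dist_eq (hfin : ∀ v, (G.neighborSet v).Finite) (x : V)
    {M : Set V} (hM : M.Infinite) (hMx : ∀ m ∈ M, G.Reachable x m) :
    ∃ r : ℕ → V, G.IsRay r ∧ r 0 = x ∧ (∀ n, G.dist x (r n) = n) ∧
      ∀ n, {m ∈ M | G.dist x (r n) + G.dist (r n) m = G.dist x m}.Infinite := by
  let Good := {w : V // G.Reachable x w ∧
    {m ∈ M | G.dist x w + G.dist w m = G.dist x m}.Infinite}
  have hstep : ∀ w : Good, ∃ w' : Good, G.Adj w.1 w'.1 ∧ G.dist x w'.1 = G.dist x w.1 + 1 := by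
    rintro ⟨w, hxw, hw⟩
    obtain ⟨w', hadj, hdist, hw'⟩ := exists_adj_infinite_dist_add_dist_eq hfin hxw hMx hw
    exact ⟨⟨w', hxw.trans hadj.reachable, hw'⟩, hadj, hdist⟩
  choose next hadj hdist using hstep
  let w₀ : Good := ⟨x, .rfl, hM.mono fun m hm => ⟨hm, by simp⟩⟩
  have hnext : ∀ n, next^[n + 1] w₀ = next (next^[n] w₀) :=
    fun n => Function.iterate_succ_apply' next n w₀
  have hr : ∀ n, G.dist x (next^[n] w₀).1 = n := by
    intro n
    induction n with
    | zero => simp [w₀]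
    | succ n ih => rw [hnext, hdist, ih]
  refine ⟨fun n => (next^[n] w₀).1, ⟨fun m n hmn => ?_, fun n => ?_⟩, rfl, hr,
    fun n => (next^[n] w₀).2.2⟩
  · simpa only [hr] using congrArg (G.dist x) hmn
  · simp only [hnext]
    exact hadj _

variable (G) in
/-- The largest `n` such that `r n` lies on a shortest path from `r 0` to `w`. -/
noncomputable def rayIndex (r : ℕ → V) (w : V) : ℕ :=
  Nat.findGreatest (fun n => G.dist (r 0) (r n) + G.dist (r n) w = G.dist (r 0) w)
    (G.dist (r 0) w)

lemma dist_add_dist_rayIndex (w : V) :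
    G.dist (r 0) (r (G.rayIndex r w)) + G.dist (r (G.rayIndex r w)) w = G.dist (r 0) w :=
  Nat.findGreatest_spec (P := fun n => G.dist (r 0) (r n) + G.dist (r n) w = G.dist (r 0) w)
    (Nat.zero_le _) (by simp)

lemma le_rayIndex (hgeo : ∀ n, G.dist (r 0) (r n) = n) {n : ℕ} {w : V}
    (h : G.dist (r 0) (r n) + G.dist (r n) w = G.dist (r 0) w) : n ≤ G.rayIndex r w :=
  Nat.le_findGreatest (by rw [← h, hgeo]; exact Nat.le_add_right _ _) h

lemma rayIndex_apply (hgeo : ∀ n, G.dist (r 0) (r n) = n) (n : ℕ) : G.rayIndex r (r n) = n :=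
  le_antisymm ((Nat.findGreatest_le _).trans (hgeo n).le)
    (le_rayIndex hgeo (by rw [dist_self, Nat.add_zero]))

lemma exists_isPath_rayIndex_eq (hr : G.IsRay r) (hgeo : ∀ n, G.dist (r 0) (r n) = n) {w : V}
    (hw : G.Reachable (r 0) w) : ∃ Q : G.Walk (r (G.rayIndex r w)) w,
      Q.IsPath ∧ ∀ z ∈ Q.support, G.rayIndex r z = G.rayIndex r w := by
  have hk := dist_add_dist_rayIndex (G := G) (r := r) w
  set k := G.rayIndex r w
  obtain ⟨Q, hQ, hQlen⟩ := ((hr.reachable k).symm.trans hw).exists_path_of_dist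
  -- Both inequalities are instances of the transitivity of betweenness along geodesics.
  refine ⟨Q, hQ, fun z hz => le_antisymm ?_ ?_⟩
  all_goals
    have hkz := Q.reachable_of_mem_support hz
    have hzw := Q.dist_add_dist_of_mem_support hQlen hz
    have h₁ := ((hr.reachable k).trans hkz).dist_triangle_left w
    have h₂ := (hr.reachable k).dist_triangle_left z
  · have hk' := dist_add_dist_rayIndex (G := G) (r := r) z
    set k' := G.rayIndex r z
    have h₃ := ((hr.reachable k').symm.trans ((hr.reachable k).trans hkz)).dist_triangle_left w
    have h₄ := (hr.reachable k').dist_triangle_left w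
    exact le_rayIndex hgeo (by omega)
  · exact le_rayIndex hgeo (by omega)

theorem exists_isRay_infinite_le_rayIndex (hfin : ∀ v, (G.neighborSet v).Finite) (x : V)
    {M : Set V} (hM : M.Infinite) (hMx : ∀ m ∈ M, G.Reachable x m) :
    ∃ r : ℕ → V, G.IsRay r ∧ r 0 = x ∧ (∀ n, G.dist (r 0) (r n) = n) ∧
      ∀ n, {m ∈ M | n ≤ G.rayIndex r m}.Infinite := by
  obtain ⟨r, hr, rfl, hgeo, hinf⟩ := exists_isRay_infinite_dist_add_dist_eq hfin x hM hMx
  exact ⟨r, hr, rfl, hgeo, fun n => (hinf n).mono fun m hm => ⟨hm.1, le_rayIndex hgeo hm.2⟩⟩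

lemma exists_isPathBetween_of_adj (hHG : H ≤ G) (hr : H.IsRay r) (hs : H.IsRay s)
    (hrgeo : ∀ n, H.dist (r 0) (r n) = n) (hsgeo : ∀ n, H.dist (s 0) (s n) = n)
    (hrs : ¬H.Reachable (r 0) (s 0)) {u v : V} (hu : H.Reachable (r 0) u)
    (hv : H.Reachable (s 0) v) (huv : G.Adj u v) :
    ∃ P : G.Walk (r (H.rayIndex r u)) (s (H.rayIndex s v)), P.IsPathBetween r s ∧
      ∀ z ∈ P.support, H.rayIndex r z = H.rayIndex r u ∨ H.rayIndex s z = H.rayIndex s v := by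
  obtain ⟨Q, hQ, hQu⟩ := exists_isPath_rayIndex_eq hr hrgeo hu
  obtain ⟨Q', hQ', hQ'v⟩ := exists_isPath_rayIndex_eq hs hsgeo hv
  have hQr : ∀ z ∈ Q.support, H.Reachable (r 0) z := fun z hz =>
    (hr.reachable _).trans (Q.reachable_of_mem_support hz)
  have hQ's : ∀ z ∈ Q'.support, H.Reachable (s 0) z := fun z hz =>
    (hs.reachable _).trans (Q'.reachable_of_mem_support hz)
  have hsep : ∀ z, H.Reachable (r 0) z → ¬H.Reachable (s 0) z := fun z hrz hsz =>
    hrs (hrz.trans hsz.symm)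
  let P : G.Walk _ _ := (Q.mapLe hHG).append (Walk.cons huv (Q'.mapLe hHG).reverse)
  have hP : ∀ z ∈ P.support, z ∈ Q.support ∨ z ∈ Q'.support := by
    intro z hz
    simp only [P, Walk.mem_support_append_iff, Walk.support_cons, Walk.support_reverse,
      Walk.support_mapLe_eq_support, List.mem_cons, List.mem_reverse] at hz
    rcases hz with hz | rfl | hz
    exacts [.inl hz, .inl Q.end_mem_support, .inr hz]
  refine ⟨P, ⟨?_, fun k hk => ?_, fun k hk => ?_⟩, fun z hz => (hP z hz).imp (hQu z) (hQ'v z)⟩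
  · refine ((Walk.isPath_mapLe hHG).mpr hQ).append
      (((Walk.isPath_mapLe hHG).mpr hQ').reverse.cons ?_) fun z hz hz' => ?_
    · simpa [Walk.support_mapLe_eq_support] using fun h => hsep u hu (hQ's u h)
    · rw [Walk.support_mapLe_eq_support] at hz
      simp only [Walk.support_cons, Walk.support_reverse, Walk.support_mapLe_eq_support,
        List.mem_cons, List.mem_reverse] at hz'
      exact hz'.resolve_right fun h => hsep z (hQr z hz) (hQ's z h)
  · rcases hP _ hk with hk | hk
    · rw [← hQu _ hk, rayIndex_apply hrgeo]
    · exact absurd (hQ's _ hk) (hsep _ (hr.reachable k))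
  · rcases hP _ hk with hk | hk
    · exact absurd (hs.reachable k) (hsep _ (hQr _ hk))
    · rw [← hQ'v _ hk, rayIndex_apply hsgeo]

lemma infinite_image_fst_of_forall_adj (hfin : ∀ v, (G.neighborSet v).Finite)
    {X : Set (V × V)} (hX : X.Infinite) (hadj : ∀ p ∈ X, G.Adj p.1 p.2) :
    (Prod.fst '' X).Infinite := fun hfin' =>
  hX <| (hfin'.biUnion fun u _ => (Set.finite_singleton u).prod (hfin u)).subset
    fun p hp => Set.mem_biUnion ⟨p, hp, rfl⟩ ⟨rfl, hadj p hp⟩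

lemma infinite_image_snd_of_forall_adj (hfin : ∀ v, (G.neighborSet v).Finite)
    {X : Set (V × V)} (hX : X.Infinite) (hadj : ∀ p ∈ X, G.Adj p.1 p.2) :
    (Prod.snd '' X).Infinite := fun hfin' =>
  hX <| (hfin'.biUnion fun v _ => (hfin v).prod (Set.finite_singleton v)).subset
    fun p hp => Set.mem_biUnion ⟨p, hp, rfl⟩ ⟨(hadj p hp).symm, rfl⟩

theorem exists_raysEquiv_of_infinite_adj (hHG : H ≤ G) (hfin : ∀ v, (G.neighborSet v).Finite)
    {x y : V} (hxy : ¬H.Reachable x y)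
    (hX : {p : V × V | G.Adj p.1 p.2 ∧ H.Reachable x p.1 ∧ H.Reachable y p.2}.Infinite) :
    ∃ r s, H.IsRay r ∧ H.IsRay s ∧ r 0 = x ∧ s 0 = y ∧ G.RaysEquiv r s := by
  set X := {p : V × V | G.Adj p.1 p.2 ∧ H.Reachable x p.1 ∧ H.Reachable y p.2}
  have hHfin : ∀ v, (H.neighborSet v).Finite := fun v => (hfin v).subset fun _ h => hHG h
  obtain ⟨r, hr, rfl, hrgeo, hrinf⟩ := exists_isRay_infinite_le_rayIndex hHfin x
    (infinite_image_fst_of_forall_adj hfin hX fun p hp => hp.1)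
    (by rintro _ ⟨p, hp, rfl⟩; exact hp.2.1)
  have hdeep : ∀ a, ∃ p ∈ X, a ≤ H.rayIndex r p.1 := fun a => by
    obtain ⟨_, ⟨p, hp, rfl⟩, ha⟩ := (hrinf a).nonempty
    exact ⟨p, hp, ha⟩
  -- König's lemma on the `y` side is applied to the second ends of the pairs `p a` only, so that
  -- pairs lying deep on that side lie deep on the `x` side as well.
  choose p hpX hpr using hdeep
  have hp : (Set.range p).Infinite := fun hfin' => by
    obtain ⟨N, hN⟩ := (hfin'.image fun q => H.rayIndex r q.1).bddAbove
    exact (hpr (N + 1)).not_gt (Nat.lt_succ_of_le (hN ⟨p (N + 1), ⟨N + 1, rfl⟩, rfl⟩))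
  obtain ⟨s, hs, rfl, hsgeo, hsinf⟩ := exists_isRay_infinite_le_rayIndex hHfin y
    (infinite_image_snd_of_forall_adj hfin hp (by rintro _ ⟨a, rfl⟩; exact (hpX a).1))
    (by rintro _ ⟨_, ⟨a, rfl⟩, rfl⟩; exact (hpX a).2.2)
  have hcouple : ∀ α β, ∃ a, α < H.rayIndex r (p a).1 ∧ β < H.rayIndex s (p a).2 := by
    intro α β
    have : {a | β + 1 ≤ H.rayIndex s (p a).2}.Infinite := by
      intro hfin'
      refine hsinf (β + 1) ((hfin'.image fun a => (p a).2).subset ?_)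
      rintro _ ⟨⟨_, ⟨a, rfl⟩, rfl⟩, hv⟩
      exact ⟨a, hv, rfl⟩
    obtain ⟨a, hβ, hα⟩ := this.exists_gt α
    exact ⟨a, hα.trans_le (hpr a), hβ⟩
  refine ⟨r, s, hr, hs, rfl, rfl, raysEquiv_of_forall_finite_exists_isPathBetween (hr.mono hHG)
    (hs.mono hHG) ?_ fun S hS => ?_⟩
  · rw [Set.disjoint_left]
    rintro _ ⟨i, rfl⟩ ⟨j, hj⟩
    exact hxy ((hr.reachable i).trans (hj ▸ hs.reachable j).symm)
  obtain ⟨α, hα⟩ := (hS.image (H.rayIndex r)).bddAbove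
  obtain ⟨β, hβ⟩ := (hS.image (H.rayIndex s)).bddAbove
  obtain ⟨a, ha, hb⟩ := hcouple α β
  obtain ⟨P, hP, hPidx⟩ := exists_isPathBetween_of_adj hHG hr hs hrgeo hsgeo hxy (hpX a).2.1
    (hpX a).2.2 (hpX a).1
  refine ⟨_, _, P, hP, fun z hz hzS => ?_⟩
  have := hα ⟨z, hzS, rfl⟩
  have := hβ ⟨z, hzS, rfl⟩
  rcases hPidx z hz with h | h <;> omega

lemma Walk.reachable_or_of_forall_mem_edges {a b u v : V} (p : G.Walk a b)
    (hp : ∀ e ∈ p.edges, e = s(u, v) ∨ e ∈ D.edgeSet) :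
    D.Reachable a b ∨ (D.Reachable a u ∧ D.Reachable v b) ∨
      (D.Reachable a v ∧ D.Reachable u b) := by
  induction p with
  | nil => exact .inl .rfl
  | @cons a c b hadj q ih =>
    have ih := ih fun e he => hp e (List.mem_cons_of_mem _ he)
    rcases hp s(a, c) List.mem_cons_self with hac | hac
    · rcases Sym2.eq_iff.mp hac with ⟨rfl, rfl⟩ | ⟨rfl, rfl⟩
      · rcases ih with h | h | h
        exacts [.inr (.inl ⟨.rfl, h⟩), .inr (.inl ⟨.rfl, h.2⟩), .inl h.2]
      · rcases ih with h | h | h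
        exacts [.inr (.inr ⟨.rfl, h⟩), .inl h.2, .inr (.inr ⟨.rfl, h.2⟩)]
    · have hac : D.Reachable a c := (D.mem_edgeSet.mp hac).reachable
      rcases ih with h | h | h
      exacts [.inl (hac.trans h), .inr (.inl ⟨hac.trans h.1, h.2⟩),
        .inr (.inr ⟨hac.trans h.1, h.2⟩)]

lemma reachable_of_isCycle_of_forall_mem_edges (hT : T.IsAcyclic) {x y u v w : V}
    (hxy : T.Adj x y) (c : G.Walk w w) (hc : c.IsCycle)
    (hcT : ∀ e ∈ c.edges, e = s(u, v) ∨ e ∈ T.edgeSet) (hxyc : s(x, y) ∈ c.edges) :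
    ((T.deleteEdges {s(x, y)}).Reachable x u ∧ (T.deleteEdges {s(x, y)}).Reachable y v) ∨
      ((T.deleteEdges {s(x, y)}).Reachable x v ∧ (T.deleteEdges {s(x, y)}).Reachable y u) := by
  set D := T.deleteEdges {s(x, y)}
  have hcK : ∀ e ∈ c.edges, e ∈ (T ⊔ edge u v).edgeSet := by
    intro e he
    rw [edgeSet_sup, edgeSet_edge]
    rcases hcT e he with rfl | h
    · exact .inr ⟨rfl, G.not_isDiag_of_mem_edgeSet (c.edges_subset_edgeSet he)⟩
    · exact .inl h
  obtain ⟨p, hp⟩ := reachable_deleteEdges_iff_exists_walk.mp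
    ((adj_and_reachable_delete_edges_iff_exists_cycle (G := T ⊔ edge u v)).mpr
      ⟨w, c.transfer _ hcK, hc.transfer hcK, by rwa [Walk.edges_transfer]⟩).2
  have hpD : ∀ e ∈ p.edges, e = s(u, v) ∨ e ∈ D.edgeSet := by
    intro e he
    have he' := p.edges_subset_edgeSet he
    rw [edgeSet_sup, edgeSet_edge] at he'
    rcases he' with h | h
    · exact .inr (by rw [edgeSet_deleteEdges]; exact ⟨h, fun hxy' => hp (hxy' ▸ he)⟩)
    · exact .inl h.1
  rcases p.reachable_or_of_forall_mem_edges hpD with h | h | h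
  · exact absurd h (isBridge_iff.mp (isAcyclic_iff_forall_adj_isBridge.mp hT hxy))
  · exact .inl ⟨h.1, h.2.symm⟩
  · exact .inr ⟨h.1, h.2.symm⟩

lemma IsRay.finite_or_finite_of_not_reachable {t : ℕ → V} (ht : T.IsRay t) {x y : V}
    (hxy : ¬(T.deleteEdges {s(x, y)}).Reachable x y) :
    {n | (T.deleteEdges {s(x, y)}).Reachable x (t n)}.Finite ∨
      {n | (T.deleteEdges {s(x, y)}).Reachable y (t n)}.Finite := by
  set D := T.deleteEdges {s(x, y)}
  obtain ⟨N, hN⟩ : ∃ N, ∀ n, N ≤ n → t n ≠ x := by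
    by_cases h : ∃ m, t m = x
    · obtain ⟨m, hm⟩ := h
      exact ⟨m + 1, fun n hn hnx => by have := ht.1 (hnx.trans hm.symm); omega⟩
    · exact ⟨0, fun n _ hn => h ⟨n, hn⟩⟩
  have htail : ∀ n, N ≤ n → D.Reachable (t N) (t n) := by
    intro n hn
    induction n, hn using Nat.le_induction with
    | base => rfl
    | succ n hn ih =>
      refine ih.trans (Adj.reachable (deleteEdges_adj.mpr ⟨ht.2 n, fun h => ?_⟩))
      rcases Sym2.eq_iff.mp (Set.mem_singleton_iff.mp h) with ⟨h, -⟩ | ⟨-, h⟩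
      exacts [hN n hn h, hN (n + 1) (by omega) h]
  by_contra! hinf
  obtain ⟨n₁, hn₁, hN₁⟩ := hinf.1.exists_gt N
  obtain ⟨n₂, hn₂, hN₂⟩ := hinf.2.exists_gt N
  exact hxy ((hn₁.trans (htail n₁ hN₁.le).symm).trans ((htail n₂ hN₂.le).trans hn₂.symm))

lemma not_raysEquiv_of_not_reachable {x y : V}
    (hr : (T.deleteEdges {s(x, y)}).IsRay r) (hs : (T.deleteEdges {s(x, y)}).IsRay s)
    (hr₀ : r 0 = x) (hs₀ : s 0 = y) (hxy : ¬(T.deleteEdges {s(x, y)}).Reachable x y) :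
    ¬T.RaysEquiv r s := by
  rintro ⟨t, ht, htr, hts⟩
  refine (ht.finite_or_finite_of_not_reachable hxy).elim (fun h => htr (h.subset ?_))
    (fun h => hts (h.subset ?_))
  all_goals
    rintro n ⟨m, hm⟩
    rw [Set.mem_ofPred_eq, ← hm]
  exacts [hr₀ ▸ hr.reachable m, hs₀ ▸ hs.reachable m]

end SimpleGraph

open SimpleGraph in
theorem stmt18_general {V : Type*} (G : SimpleGraph V) (hlf : G.LocallyFinite)
    (T : SimpleGraph V) (hTG : T ≤ G) (hT : T.IsTree) (hfaith : EndFaithful G T) :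
    ∀ f : Sym2 V,
      {e : Sym2 V | e ∈ G.edgeSet ∧ e ∉ T.edgeSet ∧
        ∃ (v : V) (c : G.Walk v v), c.IsCycle ∧
          (∀ e' ∈ c.edges, e' = e ∨ e' ∈ T.edgeSet) ∧ f ∈ c.edges}.Finite := by
  intro f
  by_cases hfT : f ∉ T.edgeSet
  · exact (Set.finite_singleton f).subset
      fun e ⟨_, _, _, _, _, hce, hfc⟩ => ((hce f hfc).resolve_right hfT).symm
  induction f using Sym2.ind with | _ x y => ?_
  rw [not_not, mem_edgeSet] at hfT
  set D := T.deleteEdges {s(x, y)}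
  have hDT : D ≤ T := deleteEdges_le _
  have hxy : ¬D.Reachable x y := isBridge_iff.mp (isAcyclic_iff_forall_adj_isBridge.mp hT.2 hfT)
  refine Set.not_infinite.mp fun hinf => ?_
  have hX : {p : V × V | G.Adj p.1 p.2 ∧ D.Reachable x p.1 ∧ D.Reachable y p.2}.Infinite := by
    refine Set.Infinite.of_image (fun p => s(p.1, p.2)) (hinf.mono ?_)
    rintro e ⟨he, -, w, c, hc, hce, hfc⟩
    induction e using Sym2.ind with | _ u v => ?_
    rcases reachable_of_isCycle_of_forall_mem_edges hT.2 hfT c hc hce hfc with h | h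
    · exact ⟨(u, v), ⟨he, h⟩, rfl⟩
    · exact ⟨(v, u), ⟨G.adj_symm he, h⟩, Sym2.eq_swap⟩
  obtain ⟨r, s, hr, hs, hr₀, hs₀, hrs⟩ :=
    exists_raysEquiv_of_infinite_adj (hDT.trans hTG) (fun v => (G.neighborSet v).toFinite) hxy hX
  exact not_raysEquiv_of_not_reachable hr hs hr₀ hs₀ hxy
    ((hfaith.1 r s (hr.mono hDT) (hs.mono hDT)).mp hrs)

theorem stmt18 {V : Type*} (G : SimpleGraph V) (hlf : G.LocallyFinite)
    (hconn : G.Connected) (hinf : Infinite V)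
    (T : SimpleGraph V) (hTG : T ≤ G) (hT : T.IsTree) (hfaith : EndFaithful G T) :
    ∀ f : Sym2 V,
      {e : Sym2 V | e ∈ G.edgeSet ∧ e ∉ T.edgeSet ∧
        ∃ (v : V) (c : G.Walk v v), c.IsCycle ∧
          (∀ e' ∈ c.edges, e' = e ∨ e' ∈ T.edgeSet) ∧ f ∈ c.edges}.Finite :=
  stmt18_general G hlf T hTG hT hfaith
end
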